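/- arXiv:1101.2188 — 8 statements merged into one kernel-verified Lean document; each statement's English description precedes it below -/
import Mathlib

section
/- Let E be a nonzero integral lattice and let h ∈ O(E) have finite order n. Form the SDC lattice L = M + N in E ⊥ E. Then there is an injective group homomorphism φ from the wreath product (ℤ/n) ≀ (ℤ/2), realized as the semidirect product ((ℤ/n) × (ℤ/n)) ⋊ (ℤ/2) in which the nontrivial element of ℤ/2 swaps the two factors, into the group of isometries of L (ℤ-linear automorphisms of L preserving the restricted bilinear form), such that φ((a,b),0) is the restriction to L of the map (x,y) ↦ (hᵃx, hᵇy), φ((0,0),1) is the restriction to L of the map t_M : (x,y) ↦ (−y,−x), and φ((−1,1),1) is the restriction to L of the map t_N : (x,y) ↦ (−h⁻¹y, −hx). -/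
/-- The homomorphism `ℤ/2 →* MulAut (K × K)` whose nontrivial value swaps the two
factors; it realizes the wreathing action of the wreath product `K ≀ (ℤ/2)`. -/
def swapHom (K : Type*) [CommGroup K] : Multiplicative (ZMod 2) →* MulAut (K × K) where
  toFun g := if Multiplicative.toAdd g = 0 then 1 else MulEquiv.prodComm
  map_one' := by simp
  map_mul' x y := by
    have hswap : (MulEquiv.prodComm : MulAut (K × K)) * MulEquiv.prodComm = 1 := by
      ext p <;> rfl
    have hc : ∀ a : ZMod 2, a = 0 ∨ a = 1 := by decide
    rcases hc (Multiplicative.toAdd x) with h1 | h1 <;>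
      rcases hc (Multiplicative.toAdd y) with h2 | h2 <;>
        simp [toAdd_mul, h1, h2, hswap, (by decide : (1 : ZMod 2) + 1 = 0),
          (by decide : (1 : ZMod 2) ≠ 0)]

/-- The group of isometries of a sublattice `L` (`ℤ`-linear automorphisms of `L`
preserving the restriction of the bilinear form `Bf`). -/
def isomSubgroup {V : Type*} [AddCommGroup V] [Module ℤ V]
    (Bf : V → V → ℤ) (L : Submodule ℤ V) : Subgroup (L ≃ₗ[ℤ] L) where
  carrier := {f | ∀ v w : L, Bf (f v) (f w) = Bf v w}
  one_mem' := fun _ _ => rfl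
  mul_mem' := by
    intro f g hf hg v w
    exact (hf (g v) (g w)).trans (hg v w)
  inv_mem' := by
    intro f hf v w
    have := hf (f.symm v) (f.symm w)
    rw [f.apply_symm_apply, f.apply_symm_apply] at this
    exact this.symm

/-!
The SDC lattice is `L = {(x, y) | y - x ∈ (h - 1)E}`. Since `h ^ k - 1` is
divisible by `h - 1`, each `h ^ a × h ^ b` preserves `L`, and so does `t_M`, which only changes
the sign of `y - x`. These maps are isometries of `E ⊥ E` satisfying the wreath-product relations,
so they define the homomorphism, and restricting to `L` gives `φ`. For injectivity, an element
with nontrivial `ℤ/2`-part fixing `(x, x)` and `(x, h x)` would force `h ^ a = -1` and `h = 1`,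
i.e. `x = -x` on the nonzero torsion-free lattice `E`.
-/

open MulAction
open scoped Pointwise

section PowHom

variable {G : Type*} {n : ℕ}

lemma pow_mod_of_pow_eq_one [Monoid G] {g : G} (hg : g ^ n = 1) (k : ℕ) :
    g ^ (k % n) = g ^ k := by
  conv_rhs => rw [← Nat.mod_add_div k n, pow_add, pow_mul, hg, one_pow, mul_one]

def zmodPowHom [NeZero n] [Monoid G] (g : G) (hg : g ^ n = 1) :
    Multiplicative (ZMod n) →* G where
  toFun a := g ^ a.toAdd.val
  map_one' := by simp
  map_mul' a b := by rw [toAdd_mul, ZMod.val_add, pow_mod_of_pow_eq_one hg, pow_add]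

lemma pow_val_eq_one_iff [NeZero n] [Monoid G] {g : G} (hg : orderOf g = n) (a : ZMod n) :
    g ^ a.val = 1 ↔ a = 0 := by
  rw [← orderOf_dvd_iff_pow_eq_one, hg, ← ZMod.natCast_eq_zero_iff, ZMod.natCast_zmod_val]

lemma pow_val_intCast [NeZero n] [Group G] {g : G} (hg : orderOf g = n) (k : ℤ) :
    g ^ (k : ZMod n).val = g ^ k := by
  rw [← zpow_natCast, ZMod.val_intCast, ← hg, zpow_mod_orderOf]

lemma pow_val_one [NeZero n] [Group G] {g : G} (hg : orderOf g = n) :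
    g ^ (1 : ZMod n).val = g := by
  simpa using pow_val_intCast hg 1

lemma pow_val_neg_one [NeZero n] [Group G] {g : G} (hg : orderOf g = n) :
    g ^ (-1 : ZMod n).val = g⁻¹ := by
  simpa using pow_val_intCast hg (-1)

lemma Multiplicative.zmod_two_eq_one_or_eq_ofAdd_one (g : Multiplicative (ZMod 2)) :
    g = 1 ∨ g = Multiplicative.ofAdd 1 := by
  revert g
  decide

end PowHom

namespace LinearEquiv

variable {R M N : Type*} [Semiring R] [AddCommMonoid M] [AddCommMonoid N] [Module R M] [Module R N]

def prodCongrHom : (M ≃ₗ[R] M) × (N ≃ₗ[R] N) →* ((M × N) ≃ₗ[R] (M × N)) where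
  toFun p := p.1.prodCongr p.2
  map_one' := rfl
  map_mul' _ _ := rfl

lemma mem_stabilizer_of_forall_apply_mem_iff {e : M ≃ₗ[R] M} {W : Submodule R M}
    (he : ∀ v, e v ∈ W ↔ v ∈ W) : e ∈ stabilizer (M ≃ₗ[R] M) W := by
  rw [Submodule.mem_stabilizer_submodule_iff_map_eq]
  ext v
  refine ⟨?_, fun hv => ⟨e.symm v, (he _).mp (by simpa using hv), by simp⟩⟩
  rintro ⟨w, hw, rfl⟩
  exact (he w).mpr hw

def restrictStabilizer (W : Submodule R M) : stabilizer (M ≃ₗ[R] M) W →* (W ≃ₗ[R] W) where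
  toFun u := u.val.ofSubmodules W W u.prop
  map_one' := by ext; rfl
  map_mul' _ _ := by ext; rfl

end LinearEquiv

def isometryGroup {R V S : Type*} [Semiring R] [AddCommMonoid V] [Module R V] (Bf : V → V → S) :
    Subgroup (V ≃ₗ[R] V) where
  carrier := {f | ∀ v w, Bf (f v) (f w) = Bf v w}
  one_mem' _ _ := rfl
  mul_mem' hf hg v w := (hf _ _).trans (hg v w)
  inv_mem' {f} hf v w := by simpa using (hf (f.symm v) (f.symm w)).symm

section SDC

variable {R E : Type*} [Ring R] [AddCommGroup E] [Module R E]

def sdcLattice (f : E →ₗ[R] E) : Submodule R (E × E) :=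
  LinearMap.graph LinearMap.id ⊔ LinearMap.graph f

lemma mem_sdcLattice_diag (f : E →ₗ[R] E) (x : E) : (x, x) ∈ sdcLattice f :=
  Submodule.mem_sup_left rfl

lemma mem_sdcLattice_graph (f : E →ₗ[R] E) (x : E) : (x, f x) ∈ sdcLattice f :=
  Submodule.mem_sup_right rfl

lemma mem_sdcLattice_iff {f : E →ₗ[R] E} {v : E × E} :
    v ∈ sdcLattice f ↔ v.2 - v.1 ∈ LinearMap.range (f - LinearMap.id) := by
  simp only [sdcLattice, Submodule.mem_sup, LinearMap.mem_graph_iff, LinearMap.mem_range]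
  constructor
  · rintro ⟨m, hm, w, hw, rfl⟩
    refine ⟨w.1, ?_⟩
    simp only [LinearMap.sub_apply, LinearMap.id_apply, Prod.snd_add, Prod.fst_add, hm, hw]
    abel
  · rintro ⟨z, hz⟩
    refine ⟨(v.1 - z, v.1 - z), rfl, (z, f z), rfl, Prod.ext (by simp) ?_⟩
    simp only [LinearMap.sub_apply, LinearMap.id_apply] at hz
    change v.1 - z + f z = v.2
    rw [sub_add_eq_add_sub, add_sub_assoc, hz, add_sub_cancel]

lemma pow_apply_sub_self_mem_range (e : E ≃ₗ[R] E) (k : ℕ) (x : E) :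
    (e ^ k) x - x ∈ LinearMap.range (e.toLinearMap - LinearMap.id) := by
  induction k with
  | zero => simp
  | succ k ih =>
    have hstep : (e ^ (k + 1)) x - x =
        (e.toLinearMap - LinearMap.id : E →ₗ[R] E) ((e ^ k) x) + ((e ^ k) x - x) := by
      simp only [pow_succ', LinearEquiv.mul_apply, LinearMap.sub_apply, LinearEquiv.coe_coe,
        LinearMap.id_apply, sub_add_sub_cancel]
    rw [hstep]
    exact add_mem (LinearMap.mem_range_self _ _) ih

lemma prodMap_pow_pow_mem_sdcLattice_iff (e : E ≃ₗ[R] E) (i j : ℕ) (v : E × E) :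
    ((e ^ i) v.1, (e ^ j) v.2) ∈ sdcLattice (e : E →ₗ[R] E) ↔
      v ∈ sdcLattice (e : E →ₗ[R] E) := by
  rw [mem_sdcLattice_iff, mem_sdcLattice_iff]
  have hsplit : (e ^ j) v.2 - (e ^ i) v.1 =
      (v.2 - v.1) + (((e ^ j) v.2 - v.2) - ((e ^ i) v.1 - v.1)) := by
    abel
  rw [hsplit]
  exact Submodule.add_mem_iff_left _
    (sub_mem (pow_apply_sub_self_mem_range e j v.2) (pow_apply_sub_self_mem_range e i v.1))

variable (R E) in
def negSwap : (E × E) ≃ₗ[R] (E × E) :=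
  (LinearEquiv.prodComm R E E).trans (LinearEquiv.neg R)

@[simp]
lemma negSwap_apply (v : E × E) : negSwap R E v = (-v.2, -v.1) := rfl

@[simp]
lemma negSwap_symm_apply (v : E × E) : (negSwap R E).symm v = (-v.2, -v.1) := rfl

lemma negSwap_pow_two : negSwap R E ^ 2 = 1 := by
  ext v <;> simp [pow_two]

lemma negSwap_apply_mem_sdcLattice_iff (f : E →ₗ[R] E) (v : E × E) :
    negSwap R E v ∈ sdcLattice f ↔ v ∈ sdcLattice f := by
  rw [mem_sdcLattice_iff, mem_sdcLattice_iff, negSwap_apply, neg_sub_neg]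

end SDC

section WreathRep

variable {R E : Type*} [Ring R] [AddCommGroup E] [Module R E] {n : ℕ} [NeZero n]
  (h : E ≃ₗ[R] E) (hh : h ^ n = 1)

def powPairHom :
    Multiplicative (ZMod n) × Multiplicative (ZMod n) →* ((E × E) ≃ₗ[R] (E × E)) :=
  LinearEquiv.prodCongrHom.comp ((zmodPowHom h hh).prodMap (zmodPowHom h hh))

lemma powPairHom_apply (p : Multiplicative (ZMod n) × Multiplicative (ZMod n)) (v : E × E) :
    powPairHom h hh p v = ((h ^ p.1.toAdd.val) v.1, (h ^ p.2.toAdd.val) v.2) := rfl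

variable (R E) in
def negSwapHom : Multiplicative (ZMod 2) →* ((E × E) ≃ₗ[R] (E × E)) :=
  zmodPowHom (negSwap R E) negSwap_pow_two

lemma negSwapHom_ofAdd_one : negSwapHom R E (Multiplicative.ofAdd 1) = negSwap R E :=
  pow_one _

lemma swapHom_ofAdd_one (K : Type*) [CommGroup K] :
    swapHom K (Multiplicative.ofAdd 1) = MulEquiv.prodComm :=
  rfl

lemma powPairHom_comp_swapHom (g : Multiplicative (ZMod 2)) :
    (powPairHom h hh).comp (swapHom _ g).toMonoidHom =
      (MulAut.conj (negSwapHom R E g)).toMonoidHom.comp (powPairHom h hh) := by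
  rcases Multiplicative.zmod_two_eq_one_or_eq_ofAdd_one g with rfl | rfl
  · ext : 1
    simp
  · ext p v <;> simp [swapHom_ofAdd_one, negSwapHom_ofAdd_one, powPairHom_apply]

def wreathRep :
    (Multiplicative (ZMod n) × Multiplicative (ZMod n)) ⋊[swapHom (Multiplicative (ZMod n))]
      Multiplicative (ZMod 2) →* ((E × E) ≃ₗ[R] (E × E)) :=
  SemidirectProduct.lift (powPairHom h hh) (negSwapHom R E) (powPairHom_comp_swapHom h hh)

lemma wreathRep_apply (w) :
    wreathRep h hh w = powPairHom h hh w.left * negSwapHom R E w.right :=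
  rfl

lemma wreathRep_mem_stabilizer (w) :
    wreathRep h hh w ∈
      stabilizer ((E × E) ≃ₗ[R] (E × E)) (sdcLattice (h : E →ₗ[R] E)) := by
  rw [wreathRep_apply]
  refine mul_mem ?_ (pow_mem ?_ _)
  · exact LinearEquiv.mem_stabilizer_of_forall_apply_mem_iff
      (prodMap_pow_pow_mem_sdcLattice_iff h _ _)
  · exact LinearEquiv.mem_stabilizer_of_forall_apply_mem_iff
      (negSwap_apply_mem_sdcLattice_iff _)

lemma eq_one_of_wreathRep_fixes_sdcLattice [IsAddTorsionFree E] [Nontrivial E]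
    (hord : orderOf h = n) (w)
    (hfix : ∀ v ∈ sdcLattice (h : E →ₗ[R] E), wreathRep h hh w v = v) : w = 1 := by
  obtain ⟨⟨a, b⟩, g⟩ := w
  have hdiag := fun x => hfix _ (mem_sdcLattice_diag _ x)
  have hgraph := fun x => hfix _ (mem_sdcLattice_graph _ x)
  rcases Multiplicative.zmod_two_eq_one_or_eq_ofAdd_one g with rfl | rfl
  · simp only [wreathRep_apply, map_one, mul_one, powPairHom_apply, Prod.ext_iff] at hdiag
    have ha : h ^ a.toAdd.val = 1 := LinearEquiv.ext fun x => (hdiag x).1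
    have hb : h ^ b.toAdd.val = 1 := LinearEquiv.ext fun x => (hdiag x).2
    rw [pow_val_eq_one_iff hord, toAdd_eq_zero] at ha hb
    subst ha hb
    rfl
  · exfalso
    simp only [wreathRep_apply, negSwapHom_ofAdd_one, LinearEquiv.mul_apply, negSwap_apply,
      powPairHom_apply, map_neg, Prod.ext_iff] at hdiag hgraph
    have hneg : ∀ x, (h ^ a.toAdd.val) x = -x := fun x => neg_eq_iff_eq_neg.mp (hdiag x).1
    have hone : h = 1 := LinearEquiv.ext fun x => by
      simpa [hneg] using (hgraph x).1
    obtain ⟨x, hx⟩ := exists_ne (0 : E)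
    refine hx (self_eq_neg.mp ?_)
    rw [← hneg x, hone, one_pow]
    rfl

end WreathRep

section Isometry

variable {R E : Type*} [CommRing R] [AddCommGroup E] [Module R E]
  (B : LinearMap.BilinForm R E)

lemma prodCongr_mem_isometryGroup {f g : E ≃ₗ[R] E} (hf : f ∈ isometryGroup fun x y => B x y)
    (hg : g ∈ isometryGroup fun x y => B x y) :
    f.prodCongr g ∈ isometryGroup fun v w : E × E => B v.1 w.1 + B v.2 w.2 := fun v w => by
  simp only [LinearEquiv.prodCongr_apply]
  exact congrArg₂ (· + ·) (hf _ _) (hg _ _)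

lemma negSwap_mem_isometryGroup :
    negSwap R E ∈ isometryGroup fun v w : E × E => B v.1 w.1 + B v.2 w.2 := fun v w => by
  simp [add_comm]

lemma wreathRep_mem_isometryGroup {n : ℕ} [NeZero n] {h : E ≃ₗ[R] E} (hh : h ^ n = 1)
    (hB : h ∈ isometryGroup fun x y => B x y) (w) :
    wreathRep h hh w ∈ isometryGroup fun v w : E × E => B v.1 w.1 + B v.2 w.2 :=
  mul_mem (prodCongr_mem_isometryGroup B (pow_mem hB _) (pow_mem hB _))
    (pow_mem (negSwap_mem_isometryGroup B) _)

end Isometry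

def restrictIsometry {V : Type*} [AddCommGroup V] (Bf : V → V → ℤ) (W : Submodule ℤ V) :
    ↥(stabilizer (V ≃ₗ[ℤ] V) W ⊓ isometryGroup Bf) →* isomSubgroup Bf W :=
  ((LinearEquiv.restrictStabilizer W).comp (Subgroup.inclusion inf_le_left)).codRestrict _
    fun f v w => f.2.2 v w

theorem stmt_0_general {E : Type*} [AddCommGroup E]
    [Module.Free ℤ E] [Nontrivial E]
    (B : E →ₗ[ℤ] E →ₗ[ℤ] ℤ)
    (h : E ≃ₗ[ℤ] E) (hB : ∀ x y, B (h x) (h y) = B x y)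
    (n : ℕ) (hn : 0 < n) (hord : orderOf h = n)
    (L : Submodule ℤ (E × E))
    (hL : L = LinearMap.graph (LinearMap.id : E →ₗ[ℤ] E) ⊔ LinearMap.graph h.toLinearMap) :
    ∃ φ : ((Multiplicative (ZMod n) × Multiplicative (ZMod n))
          ⋊[swapHom (Multiplicative (ZMod n))] Multiplicative (ZMod 2)) →*
        isomSubgroup (fun v w : E × E => B v.1 w.1 + B v.2 w.2) L,
      Function.Injective φ ∧
      (∀ (a b : ZMod n) (v : L),
        (((φ ⟨(Multiplicative.ofAdd a, Multiplicative.ofAdd b), 1⟩ : L ≃ₗ[ℤ] L) v : E × E)) =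
          ((h ^ a.val) ((v : E × E).1), (h ^ b.val) ((v : E × E).2))) ∧
      (∀ v : L,
        (((φ ⟨1, Multiplicative.ofAdd 1⟩ : L ≃ₗ[ℤ] L) v : E × E)) =
          (-(v : E × E).2, -(v : E × E).1)) ∧
      (∀ v : L,
        (((φ ⟨(Multiplicative.ofAdd (-1 : ZMod n), Multiplicative.ofAdd (1 : ZMod n)),
            Multiplicative.ofAdd 1⟩ : L ≃ₗ[ℤ] L) v : E × E)) =
          (-(h.symm (v : E × E).2), -(h ((v : E × E).1)))) := by
  obtain rfl : L = sdcLattice (h : E →ₗ[ℤ] E) := hL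
  have : NeZero n := ⟨hn.ne'⟩
  have : IsAddTorsionFree E := Module.isTorsionFree_int_iff_isAddTorsionFree.mp inferInstance
  have hh : h ^ n = 1 := hord ▸ pow_orderOf_eq_one h
  let φ := (restrictIsometry _ _).comp ((wreathRep h hh).codRestrict _ fun w =>
    ⟨wreathRep_mem_stabilizer h hh w, wreathRep_mem_isometryGroup B hh hB w⟩)
  have hφ : ∀ w (v : sdcLattice (h : E →ₗ[ℤ] E)),
      ((φ w).1 v : E × E) = wreathRep h hh w v :=
    fun _ _ => rfl
  refine ⟨φ, ?_, fun a b v => rfl, fun v => ?_, fun v => ?_⟩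
  · rw [injective_iff_map_eq_one]
    exact fun w hw => eq_one_of_wreathRep_fixes_sdcLattice h hh hord w fun v hv =>
      (hφ w ⟨v, hv⟩).symm.trans (by rw [hw]; rfl)
  · simp [hφ, wreathRep_apply, negSwapHom_ofAdd_one]
  · simp [hφ, wreathRep_apply, negSwapHom_ofAdd_one, powPairHom_apply, pow_val_one hord,
      pow_val_neg_one hord]

/-- For a nonzero integral lattice `E` and `h ∈ O(E)` of finite order `n`,
with `L = M + N` the SDC lattice in `E ⊥ E` (where `M = {(x,x)}`, `N = {(x,hx)}`), there
is an injective group homomorphism `φ` from the wreath product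
`(ℤ/n) ≀ (ℤ/2) = ((ℤ/n) × (ℤ/n)) ⋊ (ℤ/2)` (the nontrivial element of `ℤ/2` swapping the
factors) into the isometry group of `L`, such that `φ((a,b),0)` restricts
`(x,y) ↦ (hᵃx, hᵇy)`, `φ((0,0),1)` restricts `t_M : (x,y) ↦ (−y,−x)`, and `φ((−1,1),1)`
restricts `t_N : (x,y) ↦ (−h⁻¹y, −hx)`. -/
theorem stmt_0 {E : Type*} [AddCommGroup E]
    [Module.Free ℤ E] [Module.Finite ℤ E] [Nontrivial E]
    (B : E →ₗ[ℤ] E →ₗ[ℤ] ℤ) (hsymm : ∀ x y, B x y = B y x)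
    (h : E ≃ₗ[ℤ] E) (hB : ∀ x y, B (h x) (h y) = B x y)
    (n : ℕ) (hn : 0 < n) (hord : orderOf h = n)
    (L : Submodule ℤ (E × E))
    (hL : L = LinearMap.graph (LinearMap.id : E →ₗ[ℤ] E) ⊔ LinearMap.graph h.toLinearMap) :
    ∃ φ : ((Multiplicative (ZMod n) × Multiplicative (ZMod n))
          ⋊[swapHom (Multiplicative (ZMod n))] Multiplicative (ZMod 2)) →*
        isomSubgroup (fun v w : E × E => B v.1 w.1 + B v.2 w.2) L,
      Function.Injective φ ∧
      (∀ (a b : ZMod n) (v : L),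
        (((φ ⟨(Multiplicative.ofAdd a, Multiplicative.ofAdd b), 1⟩ : L ≃ₗ[ℤ] L) v : E × E)) =
          ((h ^ a.val) ((v : E × E).1), (h ^ b.val) ((v : E × E).2))) ∧
      (∀ v : L,
        (((φ ⟨1, Multiplicative.ofAdd 1⟩ : L ≃ₗ[ℤ] L) v : E × E)) =
          (-(v : E × E).2, -(v : E × E).1)) ∧
      (∀ v : L,
        (((φ ⟨(Multiplicative.ofAdd (-1 : ZMod n), Multiplicative.ofAdd (1 : ZMod n)),
            Multiplicative.ofAdd 1⟩ : L ≃ₗ[ℤ] L) v : E × E)) =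
          (-(h.symm (v : E × E).2), -(h ((v : E × E).1)))) :=
  stmt_0_general B h hB n hn hord L hL
end

section
/- Let E be an integral lattice and h ∈ O(E), and form L = M + N in E ⊥ E. Then for every v ∈ L one has 2v ∈ M + ann(M) and 2v ∈ N + ann(N); that is, M and N are RSSD sublattices of L. -/
/-!
For an isometry `g` of `E`, every `2u` with `u ∈ E ⊥ E` splits as a point of the graph
`{(x, g x)}` plus a point of the antigraph `{(a, -g a)}`, namely `2 (p, q) = (w, g w) + (a, -g a)`
with `w = p + g⁻¹ q` and `a = p - g⁻¹ q`, and the antigraph is orthogonal to the graph because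
`⟨a, z⟩ - ⟨g a, g z⟩ = 0`. Then `M` and `N` are the graphs of `1` and `h`.
-/

theorem two_smul_eq_graph_add_antigraph {E : Type*} [AddCommGroup E] [Module ℤ E]
    (g : E ≃ₗ[ℤ] E) (p q : E) :
    (2 : ℤ) • (p, q) =
      (p + g.symm q, g (p + g.symm q)) + (p - g.symm q, -g (p - g.symm q)) := by
  ext <;> simp only [two_smul, Prod.fst_add, Prod.snd_add, map_add, map_sub,
    LinearEquiv.apply_symm_apply] <;> abel

theorem antigraph_orthogonal_graph_of_isometry {R E : Type*} [CommRing R] [AddCommGroup E]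
    [Module R E] (B : E →ₗ[R] E →ₗ[R] R) (g : E ≃ₗ[R] E) (hg : ∀ x y, B (g x) (g y) = B x y)
    (a z : E) : B a z + B (-g a) (g z) = 0 := by
  rw [map_neg, LinearMap.neg_apply, hg, add_neg_cancel]

theorem exists_two_smul_eq_graph_add_orthogonal {E : Type*} [AddCommGroup E] [Module ℤ E]
    (B : E →ₗ[ℤ] E →ₗ[ℤ] ℤ) (g : E ≃ₗ[ℤ] E) (hg : ∀ x y, B (g x) (g y) = B x y) (u : E × E) :
    ∃ w a : E, (2 : ℤ) • u = (w, g w) + (a, -g a) ∧ ∀ z, B a z + B (-g a) (g z) = 0 :=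
  ⟨_, _, two_smul_eq_graph_add_antigraph g u.1 u.2,
    antigraph_orthogonal_graph_of_isometry B g hg _⟩

theorem stmt_2_general {E : Type*} [AddCommGroup E] [Module ℤ E]
    (B : E →ₗ[ℤ] E →ₗ[ℤ] ℤ)
    (h : E ≃ₗ[ℤ] E) (hB : ∀ x y, B (h x) (h y) = B x y)
    (B2 : E × E → E × E → ℤ)
    (hB2 : ∀ v w, B2 v w = B v.1 w.1 + B v.2 w.2)
    (M N L : Set (E × E))
    (hM : M = {p | ∃ x : E, p = (x, x)})
    (hN : N = {p | ∃ x : E, p = (x, h x)}) :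
    ∀ v ∈ L,
      (∃ m ∈ M, ∃ a : E × E, (∀ q ∈ M, B2 a q = 0) ∧ (2 : ℤ) • v = m + a) ∧
      (∃ n ∈ N, ∃ a : E × E, (∀ q ∈ N, B2 a q = 0) ∧ (2 : ℤ) • v = n + a) := by
  intro v _
  subst hM hN
  obtain ⟨w, a, hvM, haM⟩ :=
    exists_two_smul_eq_graph_add_orthogonal B (LinearEquiv.refl ℤ E) (fun _ _ => rfl) v
  obtain ⟨w', a', hvN, haN⟩ := exists_two_smul_eq_graph_add_orthogonal B h hB v
  refine ⟨⟨(w, w), ⟨w, rfl⟩, (a, -a), ?_, hvM⟩, ⟨(w', h w'), ⟨w', rfl⟩, (a', -h a'), ?_, hvN⟩⟩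
  all_goals
    rintro _ ⟨z, rfl⟩
    rw [hB2]
  exacts [haM z, haN z]

/-- For an integral lattice `E`, an isometry `h` of `E`, and `L = M + N` in
`E ⊥ E`, every `v ∈ L` satisfies `2v ∈ M + ann(M)` and `2v ∈ N + ann(N)`; that is,
`M` and `N` are RSSD sublattices of `L`. -/
theorem stmt_2 {E : Type*} [AddCommGroup E] [Module ℤ E]
    [Module.Free ℤ E] [Module.Finite ℤ E]
    (B : E →ₗ[ℤ] E →ₗ[ℤ] ℤ) (hsymm : ∀ x y, B x y = B y x)
    (h : E ≃ₗ[ℤ] E) (hB : ∀ x y, B (h x) (h y) = B x y)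
    (B2 : E × E → E × E → ℤ)
    (hB2 : ∀ v w, B2 v w = B v.1 w.1 + B v.2 w.2)
    (M N L : Set (E × E))
    (hM : M = {p | ∃ x : E, p = (x, x)})
    (hN : N = {p | ∃ x : E, p = (x, h x)})
    (hL : L = {p | ∃ m ∈ M, ∃ n ∈ N, p = m + n}) :
    ∀ v ∈ L,
      (∃ m ∈ M, ∃ a : E × E, (∀ q ∈ M, B2 a q = 0) ∧ (2 : ℤ) • v = m + a) ∧
      (∃ n ∈ N, ∃ a : E × E, (∀ q ∈ N, B2 a q = 0) ∧ (2 : ℤ) • v = n + a) :=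
  stmt_2_general B h hB B2 hB2 M N L hM hN
end

section
/- Let E be an integral lattice, h ∈ O(E), and L = M + N ⊆ E ⊥ E. Then for a ∈ E one has (a,0) ∈ L if and only if a ∈ (h−1)E, and (0,a) ∈ L if and only if a ∈ (h−1)E; that is, L ∩ (E × 0) = (h−1)E × 0 and L ∩ (0 × E) = 0 × (h−1)E. -/
/-!
Writing a point of `M + N` as `(u + v, u + h v)`, the parameter `u` can be chosen freely once `v`
is, so `(b, c) ∈ L` exactly when `c - b = (h - 1) v` for some `v`. Both claims are the cases
`c = 0` and `b = 0`; in the first, `-a ∈ (h - 1)E` iff `a ∈ (h - 1)E` since `h` is additive.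
-/

section

variable {E : Type*} [AddCommGroup E]

theorem exists_add_and_add_apply_iff (f : E → E) (b c : E) :
    (∃ u v, b = u + v ∧ c = u + f v) ↔ ∃ x, f x - x = c - b := by
  constructor
  · rintro ⟨u, v, rfl, rfl⟩
    exact ⟨v, by abel⟩
  · rintro ⟨x, hx⟩
    refine ⟨b - x, x, (sub_add_cancel b x).symm, ?_⟩
    rw [add_comm, ← add_sub_assoc, add_sub_right_comm, hx, sub_add_cancel]

theorem exists_apply_sub_self_eq_neg {F : Type*} [FunLike F E E] [AddMonoidHomClass F E E]
    (f : F) {a : E} : (∃ x, f x - x = a) → ∃ x, f x - x = -a := by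
  rintro ⟨x, hx⟩
  exact ⟨-x, by rw [map_neg, neg_sub_neg, ← neg_sub, hx]⟩

theorem exists_apply_sub_self_eq_neg_iff {F : Type*} [FunLike F E E] [AddMonoidHomClass F E E]
    (f : F) (a : E) : (∃ x, f x - x = -a) ↔ ∃ x, f x - x = a :=
  ⟨fun ha => neg_neg a ▸ exists_apply_sub_self_eq_neg f ha, exists_apply_sub_self_eq_neg f⟩

end

theorem stmt_3_general {E : Type*} [AddCommGroup E] [Module ℤ E]
    (h : E ≃ₗ[ℤ] E)
    (M N L : Set (E × E))
    (hM : M = {p | ∃ x : E, p = (x, x)})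
    (hN : N = {p | ∃ x : E, p = (x, h x)})
    (hL : L = {p | ∃ m ∈ M, ∃ n ∈ N, p = m + n}) :
    ∀ a : E,
      (((a, (0 : E)) ∈ L) ↔ (∃ x : E, h x - x = a)) ∧
      ((((0 : E), a) ∈ L) ↔ (∃ x : E, h x - x = a)) := by
  have hmem (b c : E) : (b, c) ∈ L ↔ ∃ x, h x - x = c - b := by
    simp only [hL, hM, hN, Set.mem_ofPred_eq, Prod.exists, Prod.mk.injEq, exists_eq_left',
      exists_eq_left, Prod.mk_add_mk]
    exact exists_add_and_add_apply_iff h b c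
  intro a
  rw [hmem, hmem, zero_sub, sub_zero, exists_apply_sub_self_eq_neg_iff]
  exact ⟨.rfl, .rfl⟩

/-- For an integral lattice `E`, an isometry `h` of `E`, and
`L = M + N ⊆ E ⊥ E` with `M = {(x,x)}`, `N = {(x,hx)}`, one has
`L ∩ (E × 0) = (h−1)E × 0` and `L ∩ (0 × E) = 0 × (h−1)E`. -/
theorem stmt_3 {E : Type*} [AddCommGroup E] [Module ℤ E]
    [Module.Free ℤ E] [Module.Finite ℤ E]
    (B : E →ₗ[ℤ] E →ₗ[ℤ] ℤ) (hsymm : ∀ x y, B x y = B y x)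
    (h : E ≃ₗ[ℤ] E) (hB : ∀ x y, B (h x) (h y) = B x y)
    (M N L : Set (E × E))
    (hM : M = {p | ∃ x : E, p = (x, x)})
    (hN : N = {p | ∃ x : E, p = (x, h x)})
    (hL : L = {p | ∃ m ∈ M, ∃ n ∈ N, p = m + n}) :
    ∀ a : E,
      (((a, (0 : E)) ∈ L) ↔ (∃ x : E, h x - x = a)) ∧
      ((((0 : E), a) ∈ L) ↔ (∃ x : E, h x - x = a)) :=
  stmt_3_general h M N L hM hN hL
end

section
/- Let E be an integral lattice, h ∈ O(E), and L = M + N ⊆ E ⊥ E. Then each of the four isometries of E ⊥ E given by t_M : (x,y) ↦ (−y,−x), t_N : (x,y) ↦ (−h⁻¹y,−hx), β : (x,y) ↦ (hx,y), and γ : (x,y) ↦ (x,hy) maps L bijectively onto L. -/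
/-!
The difference map `(x, y) ↦ x - y` identifies `L = M + N` with the preimage of `(1 - h) E`:
`(a + b, a + h b)` has difference `b - h b`, and conversely `a := x - b` recovers a decomposition.
Each of the four maps, and each inverse, changes `x - y` only by elements such as `h x - x`,
`y - h⁻¹ y`, which lie in `(1 - h) E`, so they all preserve `L`.
-/

open Set Function

section

variable {R E : Type*} [Ring R] [AddCommGroup E] [Module R E] (h : E ≃ₗ[R] E)

/-- The paper's `L = M + N`, with `M` the diagonal and `N` the graph of `h`. -/
def diagAddGraph : Set (E × E) :=
  {p | ∃ m ∈ {q : E × E | ∃ x, q = (x, x)}, ∃ n ∈ {q : E × E | ∃ x, q = (x, h x)}, p = m + n}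

def oneSubRange : Submodule R E := LinearMap.range (1 - h.toLinearMap)

variable {h}

theorem sub_apply_mem_oneSubRange (x : E) : x - h x ∈ oneSubRange h := ⟨x, rfl⟩

theorem apply_sub_mem_oneSubRange (x : E) : h x - x ∈ oneSubRange h := by
  simpa using neg_mem (sub_apply_mem_oneSubRange (h := h) x)

theorem sub_symm_apply_mem_oneSubRange (x : E) : x - h.symm x ∈ oneSubRange h := by
  simpa using apply_sub_mem_oneSubRange (h := h) (h.symm x)

theorem symm_apply_sub_mem_oneSubRange (x : E) : h.symm x - x ∈ oneSubRange h := by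
  simpa using sub_apply_mem_oneSubRange (h := h) (h.symm x)

theorem mem_diagAddGraph_iff {p : E × E} : p ∈ diagAddGraph h ↔ p.1 - p.2 ∈ oneSubRange h := by
  constructor
  · rintro ⟨_, ⟨a, rfl⟩, _, ⟨b, rfl⟩, rfl⟩
    simpa using sub_apply_mem_oneSubRange (h := h) b
  · rintro ⟨b, hb⟩
    refine ⟨(p.1 - b, p.1 - b), ⟨_, rfl⟩, (b, h b), ⟨b, rfl⟩, ?_⟩
    simp only [LinearMap.sub_apply, Module.End.one_apply, LinearEquiv.coe_coe] at hb
    ext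
    · simp
    · simp [sub_add, hb]

theorem mapsTo_diagAddGraph {f : E × E → E × E}
    (hf : ∀ p, (f p).1 - (f p).2 - (p.1 - p.2) ∈ oneSubRange h) :
    MapsTo f (diagAddGraph h) (diagAddGraph h) := fun p hp => by
  rw [mem_diagAddGraph_iff] at hp ⊢
  simpa using add_mem (hf p) hp

theorem bijOn_diagAddGraph {f g : E × E → E × E} (hgf : LeftInverse g f) (hfg : RightInverse g f)
    (hf : ∀ p, (f p).1 - (f p).2 - (p.1 - p.2) ∈ oneSubRange h)
    (hg : ∀ p, (g p).1 - (g p).2 - (p.1 - p.2) ∈ oneSubRange h) :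
    BijOn f (diagAddGraph h) (diagAddGraph h) :=
  InvOn.bijOn ⟨hgf.leftInvOn _, hfg.leftInvOn _⟩ (mapsTo_diagAddGraph hf) (mapsTo_diagAddGraph hg)

variable (h)

theorem bijOn_neg_swap_diagAddGraph :
    BijOn (fun p : E × E => (-p.2, -p.1)) (diagAddGraph h) (diagAddGraph h) := by
  have hdiff (p : E × E) : -p.2 - -p.1 - (p.1 - p.2) ∈ oneSubRange h := by
    convert zero_mem (oneSubRange h) using 1
    abel
  exact bijOn_diagAddGraph (g := fun p => (-p.2, -p.1)) (fun p => by simp) (fun p => by simp)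
    hdiff hdiff

theorem bijOn_neg_symm_apply_swap_diagAddGraph :
    BijOn (fun p : E × E => (-(h.symm p.2), -(h p.1))) (diagAddGraph h) (diagAddGraph h) := by
  have hdiff (p : E × E) : -h.symm p.2 - -h p.1 - (p.1 - p.2) ∈ oneSubRange h := by
    convert add_mem (apply_sub_mem_oneSubRange p.1) (sub_symm_apply_mem_oneSubRange p.2) using 1
    abel
  exact bijOn_diagAddGraph (g := fun p => (-(h.symm p.2), -(h p.1))) (fun p => by simp)
    (fun p => by simp) hdiff hdiff

theorem bijOn_map_fst_diagAddGraph :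
    BijOn (fun p : E × E => (h p.1, p.2)) (diagAddGraph h) (diagAddGraph h) :=
  bijOn_diagAddGraph (g := fun p => (h.symm p.1, p.2)) (fun p => by simp) (fun p => by simp)
    (fun p => by simpa using apply_sub_mem_oneSubRange p.1)
    (fun p => by simpa using symm_apply_sub_mem_oneSubRange p.1)

theorem bijOn_map_snd_diagAddGraph :
    BijOn (fun p : E × E => (p.1, h p.2)) (diagAddGraph h) (diagAddGraph h) :=
  bijOn_diagAddGraph (g := fun p => (p.1, h.symm p.2)) (fun p => by simp) (fun p => by simp)
    (fun p => by simpa using sub_apply_mem_oneSubRange p.2)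
    (fun p => by simpa using sub_symm_apply_mem_oneSubRange p.2)

end

theorem stmt_4_general {E : Type*} [AddCommGroup E] [Module ℤ E]
    (h : E ≃ₗ[ℤ] E)
    (M N L : Set (E × E))
    (hM : M = {p | ∃ x : E, p = (x, x)})
    (hN : N = {p | ∃ x : E, p = (x, h x)})
    (hL : L = {p | ∃ m ∈ M, ∃ n ∈ N, p = m + n})
    (tM tN β γ : E × E → E × E)
    (htM : ∀ p, tM p = (-p.2, -p.1))
    (htN : ∀ p, tN p = (-(h.symm p.2), -(h p.1)))
    (hβ : ∀ p, β p = (h p.1, p.2))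
    (hγ : ∀ p, γ p = (p.1, h p.2)) :
    Set.BijOn tM L L ∧ Set.BijOn tN L L ∧ Set.BijOn β L L ∧ Set.BijOn γ L L := by
  subst hM hN hL
  rw [funext htM, funext htN, funext hβ, funext hγ]
  exact ⟨bijOn_neg_swap_diagAddGraph h, bijOn_neg_symm_apply_swap_diagAddGraph h,
    bijOn_map_fst_diagAddGraph h, bijOn_map_snd_diagAddGraph h⟩

/-- For an integral lattice `E`, an isometry `h` of `E`, and
`L = M + N ⊆ E ⊥ E`, each of the four isometries `t_M : (x,y) ↦ (−y,−x)`,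
`t_N : (x,y) ↦ (−h⁻¹y,−hx)`, `β : (x,y) ↦ (hx,y)`, `γ : (x,y) ↦ (x,hy)` of `E ⊥ E`
maps `L` bijectively onto `L`. -/
theorem stmt_4 {E : Type*} [AddCommGroup E] [Module ℤ E]
    [Module.Free ℤ E] [Module.Finite ℤ E]
    (B : E →ₗ[ℤ] E →ₗ[ℤ] ℤ) (hsymm : ∀ x y, B x y = B y x)
    (h : E ≃ₗ[ℤ] E) (hB : ∀ x y, B (h x) (h y) = B x y)
    (M N L : Set (E × E))
    (hM : M = {p | ∃ x : E, p = (x, x)})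
    (hN : N = {p | ∃ x : E, p = (x, h x)})
    (hL : L = {p | ∃ m ∈ M, ∃ n ∈ N, p = m + n})
    (tM tN β γ : E × E → E × E)
    (htM : ∀ p, tM p = (-p.2, -p.1))
    (htN : ∀ p, tN p = (-(h.symm p.2), -(h p.1)))
    (hβ : ∀ p, β p = (h p.1, p.2))
    (hγ : ∀ p, γ p = (p.1, h p.2)) :
    Set.BijOn tM L L ∧ Set.BijOn tN L L ∧ Set.BijOn β L L ∧ Set.BijOn γ L L :=
  stmt_4_general h M N L hM hN hL tM tN β γ htM htN hβ hγ
end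

section
/- Let E be an even positive definite integral lattice (⟨x,x⟩ ∈ 2ℤ for all x ∈ E and ⟨x,x⟩ > 0 for all x ≠ 0) and let h ∈ O(E). Then the lattice L = M + N ⊆ E ⊥ E contains no roots if and only if h is rootless, i.e., (h−1)E contains no roots. -/
/-!
Every element of `L` has the form `(x + y, x + h y)`. Its norm is a sum of two even nonnegative
integers, so if it is `2` one coordinate vanishes by positivity; then the other one is
`±(h y - y)`, a root of `(h - 1)E`. Conversely `(0, h x - x) = (-x, -x) + (x, h x)` lies in `L`.
-/

lemma eq_zero_or_eq_zero_of_self_add_self_eq_two {E : Type*} [AddCommGroup E] [Module ℤ E]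
    (B : E →ₗ[ℤ] E →ₗ[ℤ] ℤ) (heven : ∀ x : E, (2 : ℤ) ∣ B x x)
    (hpos : ∀ x : E, x ≠ 0 → 0 < B x x) {x y : E} (hxy : B x x + B y y = 2) :
    (x = 0 ∧ B y y = 2) ∨ (B x x = 2 ∧ y = 0) := by
  have hnonneg (z : E) : 0 ≤ B z z := by
    rcases eq_or_ne z 0 with rfl | hz
    · simp
    · exact (hpos z hz).le
  have eq_zero_of_self_eq_zero (z : E) (hz : B z z = 0) : z = 0 := by
    by_contra hz0
    exact (hpos z hz0).ne' hz
  obtain ⟨p, hp⟩ := heven x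
  obtain ⟨q, hq⟩ := heven y
  have := hnonneg x
  have := hnonneg y
  rcases (by omega : (B x x = 0 ∧ B y y = 2) ∨ (B x x = 2 ∧ B y y = 0)) with ⟨hx, hy⟩ | ⟨hx, hy⟩
  · exact .inl ⟨eq_zero_of_self_eq_zero x hx, hy⟩
  · exact .inr ⟨hx, eq_zero_of_self_eq_zero y hy⟩

theorem stmt_6_general {E : Type*} [AddCommGroup E] [Module ℤ E]
    (B : E →ₗ[ℤ] E →ₗ[ℤ] ℤ)
    (heven : ∀ x : E, (2 : ℤ) ∣ B x x)
    (hpos : ∀ x : E, x ≠ 0 → 0 < B x x)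
    (h : E ≃ₗ[ℤ] E)
    (B2 : E × E → E × E → ℤ)
    (hB2 : ∀ v w, B2 v w = B v.1 w.1 + B v.2 w.2)
    (M N L : Set (E × E))
    (hM : M = {p | ∃ x : E, p = (x, x)})
    (hN : N = {p | ∃ x : E, p = (x, h x)})
    (hL : L = {p | ∃ m ∈ M, ∃ n ∈ N, p = m + n}) :
    (∀ v ∈ L, B2 v v ≠ 2) ↔ (∀ x : E, B (h x - x) (h x - x) ≠ 2) := by
  subst hM hN hL
  constructor
  · intro hL x hx
    have hmem : ((0 : E), h x - x) = (-x, -x) + (x, h x) := by ext <;> simp; abel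
    exact hL _ ⟨_, ⟨-x, rfl⟩, _, ⟨x, rfl⟩, hmem⟩ (by simpa [hB2] using hx)
  · rintro hroot _ ⟨_, ⟨x, rfl⟩, _, ⟨y, rfl⟩, rfl⟩ hv
    simp only [hB2, Prod.fst_add, Prod.snd_add] at hv
    rcases eq_zero_or_eq_zero_of_self_add_self_eq_two B heven hpos hv with ⟨hxy, h2⟩ | ⟨h2, hxy⟩
    · have : x + h y = h y - y := by rw [eq_neg_of_add_eq_zero_left hxy]; abel
      exact hroot y (this ▸ h2)
    · have : x + y = -(h y - y) := by rw [eq_neg_of_add_eq_zero_left hxy]; abel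
      rw [this, LinearMap.map_neg₂, map_neg, neg_neg] at h2
      exact hroot y h2

/-- For an even positive definite integral lattice `E` and `h ∈ O(E)`, the
lattice `L = M + N ⊆ E ⊥ E` contains no roots if and only if `h` is rootless, i.e.
`(h−1)E` contains no roots. -/
theorem stmt_6 {E : Type*} [AddCommGroup E] [Module ℤ E]
    [Module.Free ℤ E] [Module.Finite ℤ E]
    (B : E →ₗ[ℤ] E →ₗ[ℤ] ℤ) (hsymm : ∀ x y, B x y = B y x)
    (heven : ∀ x : E, (2 : ℤ) ∣ B x x)
    (hpos : ∀ x : E, x ≠ 0 → 0 < B x x)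
    (h : E ≃ₗ[ℤ] E) (hB : ∀ x y, B (h x) (h y) = B x y)
    (B2 : E × E → E × E → ℤ)
    (hB2 : ∀ v w, B2 v w = B v.1 w.1 + B v.2 w.2)
    (M N L : Set (E × E))
    (hM : M = {p | ∃ x : E, p = (x, x)})
    (hN : N = {p | ∃ x : E, p = (x, h x)})
    (hL : L = {p | ∃ m ∈ M, ∃ n ∈ N, p = m + n}) :
    (∀ v ∈ L, B2 v v ≠ 2) ↔ (∀ x : E, B (h x - x) (h x - x) ≠ 2) :=
  stmt_6_general B heven hpos h B2 hB2 M N L hM hN hL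
end

section
/- Let E be an integral lattice that contains a root, let h ∈ O(E), let p and q be distinct primes, and suppose g = hˢ and k = hᵗ are powers of h such that g has order a positive power of p, k has order a positive power of q, and both g − 1 and k − 1 are injective on E (i.e., g and k have no nonzero fixed vectors). Then h is not rootless. -/
/-!
Since `hⁿ - 1 = (h - 1)(1 + h + ⋯ + hⁿ⁻¹)`, the image of `hⁿ - 1` lies in that of `h - 1`.
If `g = hˢ` has order `n` and no nonzero fixed vector, then `∑_{i<n} gⁱ x` is fixed by `g`,
hence zero, so `n • x = -∑_{i<n} (gⁱ - 1) x` lies in the image of `h - 1`. Applied to `g` and `k`,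
whose orders `pᵃ` and `qᵇ` are coprime, Bézout puts every vector, in particular a root, in `(h - 1)E`.
-/

open Finset LinearMap

theorem LinearEquiv.toLinearMap_pow {R M : Type*} [Semiring R] [AddCommMonoid M] [Module R M]
    (e : M ≃ₗ[R] M) (n : ℕ) : ((e ^ n : M ≃ₗ[R] M) : Module.End R M) = (e : Module.End R M) ^ n :=
  map_pow LinearEquiv.automorphismGroup.toLinearMapMonoidHom e n

theorem Submodule.mem_of_isCoprime_smul_mem {R M : Type*} [CommRing R] [AddCommGroup M]
    [Module R M] (N : Submodule R M) {m n : R} (hmn : IsCoprime m n) {x : M}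
    (hm : m • x ∈ N) (hn : n • x ∈ N) : x ∈ N := by
  obtain ⟨u, v, huv⟩ := hmn
  rw [← one_smul R x, ← huv, add_smul, mul_smul, mul_smul]
  exact add_mem (N.smul_mem u hm) (N.smul_mem v hn)

namespace Module.End

variable {R M : Type*} [Ring R] [AddCommGroup M] [Module R M]

theorem range_pow_sub_one_le (f : Module.End R M) (n : ℕ) :
    range (f ^ n - 1) ≤ range (f - 1) := by
  rw [← mul_geom_sum, Module.End.mul_eq_comp]
  exact range_comp_le_range _ _

theorem natCast_smul_mem_range_sub_one {g : Module.End R M} {n : ℕ} (hgn : g ^ n = 1)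
    (hfix : ∀ x, g x = x → x = 0) (x : M) : (n : R) • x ∈ range (g - 1) := by
  have hsum_fixed : g ((∑ i ∈ range n, g ^ i) x) = (∑ i ∈ range n, g ^ i) x := by
    rw [← sub_eq_zero, ← Module.End.mul_apply, ← LinearMap.sub_apply, ← sub_one_mul,
      mul_geom_sum, hgn, sub_self, LinearMap.zero_apply]
  have hsmul : (n : R) • x = -∑ i ∈ range n, (g ^ i - 1) x := by
    rw [← LinearMap.sum_apply, sum_sub_distrib, LinearMap.sub_apply, hfix _ hsum_fixed]
    simp [Nat.cast_smul_eq_nsmul]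
  rw [hsmul]
  exact neg_mem (sum_mem fun i _ ↦ range_pow_sub_one_le g i (mem_range_self _ x))

theorem natCast_smul_mem_range_sub_one_of_pow {f : Module.End R M} {s n : ℕ}
    (hn : (f ^ s) ^ n = 1) (hfix : ∀ x, (f ^ s) x = x → x = 0) (x : M) :
    (n : R) • x ∈ range (f - 1) :=
  range_pow_sub_one_le f s (natCast_smul_mem_range_sub_one hn hfix x)

end Module.End

theorem stmt_8_general {E : Type*} [AddCommGroup E] [Module ℤ E]
    (B : E →ₗ[ℤ] E →ₗ[ℤ] ℤ)
    (hroot : ∃ r : E, B r r = 2)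
    (h : E ≃ₗ[ℤ] E)
    (p q : ℕ) (hp : p.Prime) (hq : q.Prime) (hpq : p ≠ q)
    (s t : ℕ) (a b : ℕ)
    (hordg : orderOf (h ^ s) = p ^ a)
    (hordk : orderOf (h ^ t) = q ^ b)
    (hgfpf : ∀ x : E, (h ^ s) x = x → x = 0)
    (hkfpf : ∀ x : E, (h ^ t) x = x → x = 0) :
    ∃ x : E, B (h x - x) (h x - x) = 2 := by
  obtain ⟨r, hr⟩ := hroot
  have hcop : IsCoprime ((p ^ a : ℕ) : ℤ) ((q ^ b : ℕ) : ℤ) :=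
    Nat.isCoprime_iff_coprime.mpr (((Nat.coprime_primes hp hq).mpr hpq).pow a b)
  have hpow_eq_one {n m : ℕ} (hnm : orderOf (h ^ n) = m) : ((h : Module.End ℤ E) ^ n) ^ m = 1 := by
    rw [← LinearEquiv.toLinearMap_pow, ← LinearEquiv.toLinearMap_pow, ← hnm, pow_orderOf_eq_one]
    rfl
  have hr_mem : r ∈ range ((h : Module.End ℤ E) - 1) :=
    Submodule.mem_of_isCoprime_smul_mem _ hcop
      (Module.End.natCast_smul_mem_range_sub_one_of_pow (hpow_eq_one hordg)
        (by rw [← LinearEquiv.toLinearMap_pow]; exact hgfpf) r)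
      (Module.End.natCast_smul_mem_range_sub_one_of_pow (hpow_eq_one hordk)
        (by rw [← LinearEquiv.toLinearMap_pow]; exact hkfpf) r)
  obtain ⟨x, hx⟩ := hr_mem
  exact ⟨x, by rw [← hr, ← hx]; rfl⟩

/-- Let `E` be an integral lattice containing a root, `h ∈ O(E)`, and let
`p ≠ q` be primes. Suppose `g = hˢ` and `k = hᵗ` are powers of `h` such that `g` has order
a positive power of `p`, `k` has order a positive power of `q`, and both `g − 1` and
`k − 1` are injective on `E` (no nonzero fixed vectors). Then `h` is not rootless:
`(h−1)E` contains a root. -/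
theorem stmt_8 {E : Type*} [AddCommGroup E] [Module ℤ E]
    [Module.Free ℤ E] [Module.Finite ℤ E]
    (B : E →ₗ[ℤ] E →ₗ[ℤ] ℤ) (hsymm : ∀ x y, B x y = B y x)
    (hroot : ∃ r : E, B r r = 2)
    (h : E ≃ₗ[ℤ] E) (hB : ∀ x y, B (h x) (h y) = B x y)
    (p q : ℕ) (hp : p.Prime) (hq : q.Prime) (hpq : p ≠ q)
    (s t : ℕ) (a b : ℕ) (ha : 1 ≤ a) (hb : 1 ≤ b)
    (hordg : orderOf (h ^ s) = p ^ a)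
    (hordk : orderOf (h ^ t) = q ^ b)
    (hgfpf : ∀ x : E, (h ^ s) x = x → x = 0)
    (hkfpf : ∀ x : E, (h ^ t) x = x → x = 0) :
    ∃ x : E, B (h x - x) (h x - x) = 2 :=
  stmt_8_general B hroot h p q hp hq hpq s t a b hordg hordk hgfpf hkfpf
end

section
/- For every n ≥ 1, the sublattice (h_{A_n} − 1)A_n of A_n contains no roots, i.e., no vector of the form (h_{A_n} − 1)α with α ∈ A_n has norm 2 under the standard inner product. -/
/-!
A vector of `A_n` of norm `2` is `e_j - e_k` with `j ≠ k`. If `(h - 1)α = e_j - e_k`, pair both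
sides with the weights `i ↦ i`: summation by parts turns the left side into `(n + 1) α₀ - Σ αᵢ`
(the only boundary term comes from the wrap-around `n ↦ 0`), so `j - k` would be a nonzero
multiple of `n + 1`, although `|j - k| ≤ n`.
-/

open Finset

theorem Fintype.sum_sub_comp_add_right {G M : Type*} [AddGroup G] [Fintype G] [AddCommGroup M]
    (f : G → M) (a : G) : ∑ i, (f (i + a) - f i) = 0 := by
  rw [sum_sub_distrib, sub_eq_zero]
  exact Equiv.sum_comp (Equiv.addRight a) f

theorem Int.exists_eq_single_sub_single_of_sum_eq_zero_of_sum_mul_self_eq_two {ι : Type*}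
    [Fintype ι] [DecidableEq ι] {β : ι → ℤ} (hsum : ∑ i, β i = 0) (hnorm : ∑ i, β i * β i = 2) :
    ∃ j k, j ≠ k ∧ β = Pi.single j 1 - Pi.single k 1 := by
  have hβ_ne_zero : β ≠ 0 := by
    rintro rfl
    simp at hnorm
  obtain ⟨j, hj⟩ : ∃ j, 0 < β j := by
    by_contra! hle
    refine hβ_ne_zero (funext fun i => ?_)
    exact (sum_eq_zero_iff_of_nonpos fun i _ => hle i).1 hsum i (mem_univ i)
  obtain ⟨k, hk⟩ : ∃ k, β k < 0 := by
    by_contra! hge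
    refine hβ_ne_zero (funext fun i => ?_)
    exact (sum_eq_zero_iff_of_nonneg fun i _ => hge i).1 hsum i (mem_univ i)
  have hjk : j ≠ k := by rintro rfl; omega
  have hk_mem : k ∈ univ.erase j := mem_erase.2 ⟨hjk.symm, mem_univ k⟩
  set rest := (univ.erase j).erase k
  have hsplit : β j * β j + (β k * β k + ∑ i ∈ rest, β i * β i) = 2 := by
    rw [add_sum_erase _ (fun i => β i * β i) hk_mem,
      add_sum_erase _ (fun i => β i * β i) (mem_univ j), hnorm]
  have hrest_nonneg : 0 ≤ ∑ i ∈ rest, β i * β i := sum_nonneg fun i _ => mul_self_nonneg (β i)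
  have hβj : β j = 1 := by nlinarith
  have hβk : β k = -1 := by nlinarith
  have hrest : ∀ i ∈ rest, β i * β i = 0 :=
    (sum_eq_zero_iff_of_nonneg fun i _ => mul_self_nonneg (β i)).1 (by nlinarith)
  refine ⟨j, k, hjk, funext fun i => ?_⟩
  by_cases hij : i = j
  · subst hij; simp [hβj, hjk]
  by_cases hik : i = k
  · subst hik; simp [hβk, hij]
  have := hrest i (by simp [rest, hij, hik])
  simp [hij, hik, mul_self_eq_zero.1 this]

theorem Fin.sum_val_mul_sub_comp_add_one {n : ℕ} (α : Fin (n + 1) → ℤ) :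
    ∑ i : Fin (n + 1), (i : ℤ) * (α (i + 1) - α i) = (n + 1) * α 0 - ∑ i, α i := by
  simp only [mul_sub, sum_sub_distrib]
  rw [Fin.sum_univ_castSucc (fun i => (i : ℤ) * α (i + 1)),
    Fin.sum_univ_succ (fun i => (i : ℤ) * α i), Fin.sum_univ_succ α]
  simp only [Fin.coeSucc_eq_succ, Fin.last_add_one, Fin.val_castSucc, Fin.val_succ, Fin.val_last,
    Fin.val_zero]
  push_cast
  simp only [add_mul, one_mul, sum_add_distrib]
  ring

theorem Fin.eq_of_dvd_val_sub {m : ℕ} {j k : Fin m} (h : (m : ℤ) ∣ (j : ℤ) - k) : j = k := by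
  have := Int.eq_zero_of_abs_lt_dvd h (abs_sub_lt_iff.2 ⟨by omega, by omega⟩)
  omega

theorem stmt_9_general (n : ℕ) :
    ¬ ∃ α : Fin (n + 1) → ℤ, (∑ i, α i) = 0 ∧
      (∑ i, (α (i + 1) - α i) * (α (i + 1) - α i)) = 2 := by
  rintro ⟨α, hsum, hnorm⟩
  obtain ⟨j, k, hjk, hβ⟩ := Int.exists_eq_single_sub_single_of_sum_eq_zero_of_sum_mul_self_eq_two
    (Fintype.sum_sub_comp_add_right α 1) hnorm
  have hweighted := Fin.sum_val_mul_sub_comp_add_one α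
  rw [hsum, sub_zero] at hweighted
  simp only [congrFun hβ, Pi.sub_apply, Pi.single_apply, mul_sub, mul_ite, mul_one, mul_zero,
    sum_sub_distrib, sum_ite_eq', mem_univ, if_true] at hweighted
  exact hjk (Fin.eq_of_dvd_val_sub ⟨α 0, by rw [hweighted]; push_cast; ring⟩)

/-- For every `n ≥ 1`, the sublattice `(h_{A_n} − 1)A_n` of the root lattice
`A_n = {x ∈ ℤ^{n+1} : Σ xᵢ = 0}` contains no roots: no vector `(h_{A_n} − 1)α` with
`α ∈ A_n` has norm `2`, where `h_{A_n}` cyclically shifts the coordinates. -/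
theorem stmt_9 (n : ℕ) (hn : 1 ≤ n) :
    ¬ ∃ α : Fin (n + 1) → ℤ, (∑ i, α i) = 0 ∧
      (∑ i, (α (i + 1) - α i) * (α (i + 1) - α i)) = 2 :=
  stmt_9_general n
end

section
/- There is no rootless element of order 7 in O(E8): every h ∈ O(E8) with h of order 7 satisfies that (h−1)E8 contains a vector of norm 2. -/
/-- The `E₈` lattice as a `ℤ`-submodule of `ℚ⁸`: vectors whose coordinates are either all
integers or all in `ℤ + 1/2`, with even coordinate sum. -/
def E8Lat : Submodule ℤ (Fin 8 → ℚ) where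
  carrier := {x | ((∀ i, ∃ z : ℤ, x i = z) ∨ (∀ i, ∃ z : ℤ, x i = z + 1/2)) ∧
    ∃ k : ℤ, (∑ i, x i) = 2 * k}
  add_mem' := by
    rintro a b ⟨ha, ka, hka⟩ ⟨hb, kb, hkb⟩
    refine ⟨?_, ka + kb, ?_⟩
    · rcases ha with ha | ha <;> rcases hb with hb | hb
      · left; intro i
        obtain ⟨z, hz⟩ := ha i; obtain ⟨w, hw⟩ := hb i
        exact ⟨z + w, by simp only [Pi.add_apply, hz, hw]; push_cast; ring⟩
      · right; intro i
        obtain ⟨z, hz⟩ := ha i; obtain ⟨w, hw⟩ := hb i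
        exact ⟨z + w, by simp only [Pi.add_apply, hz, hw]; push_cast; ring⟩
      · right; intro i
        obtain ⟨z, hz⟩ := ha i; obtain ⟨w, hw⟩ := hb i
        exact ⟨z + w, by simp only [Pi.add_apply, hz, hw]; push_cast; ring⟩
      · left; intro i
        obtain ⟨z, hz⟩ := ha i; obtain ⟨w, hw⟩ := hb i
        exact ⟨z + w + 1, by simp only [Pi.add_apply, hz, hw]; push_cast; ring⟩
    · simp only [Pi.add_apply, Finset.sum_add_distrib, hka, hkb]
      push_cast; ring
  zero_mem' := ⟨Or.inl fun i => ⟨0, by simp⟩, 0, by simp⟩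
  smul_mem' := by
    rintro c x ⟨hx, k, hk⟩
    refine ⟨?_, c * k, ?_⟩
    · rcases hx with hx | hx
      · left; intro i
        obtain ⟨z, hz⟩ := hx i
        exact ⟨c * z, by simp only [Pi.smul_apply, hz, zsmul_eq_mul]; push_cast; ring⟩
      · rcases Int.even_or_odd c with ⟨d, hd⟩ | ⟨d, hd⟩
        · left; intro i
          obtain ⟨z, hz⟩ := hx i
          exact ⟨c * z + d, by simp only [Pi.smul_apply, hz, hd, zsmul_eq_mul]; push_cast; ring⟩
        · right; intro i
          obtain ⟨z, hz⟩ := hx i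
          exact ⟨c * z + d, by simp only [Pi.smul_apply, hz, hd, zsmul_eq_mul]; push_cast; ring⟩
    · simp only [Pi.smul_apply, zsmul_eq_mul, ← Finset.mul_sum, hk]
      push_cast; ring

/-- The bilinear form on `E₈` induced by the standard inner product of `ℚ⁸`. -/
def E8form (x y : E8Lat) : ℚ := ∑ i, (x : Fin 8 → ℚ) i * (y : Fin 8 → ℚ) i

/-!
Let `M` be the matrix of `h` on `ℚ⁸`. Since `M ^ 7 = 1 ≠ M`, the kernel of `Φ₇(M) = ∑_{k<7} M ^ k`
is a vector space over `ℚ(ζ₇)`, hence of dimension `6`, so the fixed space of `M` is a plane and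
`tr Φ₇(M) = 7 · 2 = 14`.

The root set `R` of `E₈` is stable under permutations and paired sign changes of coordinates, so
its second moment is `(|R| / 4) I` and `∑_{y ∈ R} ⟨Φ₇(M) y, y⟩ = (|R| / 4) · 14`. If `h` were
rootless, then for a root `y` not fixed by `h` and `0 < k < 7` the integer `⟨hᵏ y, y⟩` would be
`< 2` and `≠ 1`, since otherwise `hᵏ y - y = (h - 1) (∑_{j<k} hʲ y)` is a root. So a non-fixed
root contributes at most `2` and a fixed one `14`, giving `|R| ≤ 8 F` for the number `F` of fixed
roots. But the fixed roots lie in a plane, so `F ≤ 6`, while the roots `eᵢ - eⱼ` alone give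
`|R| ≥ 56`.
-/

open Matrix Module Polynomial

namespace Module.End

section

variable {K V : Type*} [Field K] [AddCommGroup V] [Module K V] {f : Module.End K V} {p : ℕ}

theorem natDegree_dvd_finrank_of_aeval_eq_zero [FiniteDimensional K V] {P : K[X]}
    (hP : Irreducible P) (hf : aeval f P = 0) : P.natDegree ∣ finrank K V := by
  have : Fact (Irreducible P) := ⟨hP⟩
  let φ : AdjoinRoot P →ₐ[K] Module.End K V :=
    Ideal.Quotient.liftₐ _ (aeval f) fun a ha => by
      obtain ⟨c, rfl⟩ := Ideal.mem_span_singleton'.1 ha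
      rw [map_mul, hf, mul_zero]
  let : Module (AdjoinRoot P) V := Module.compHom V φ.toRingHom
  have : IsScalarTower K (AdjoinRoot P) V :=
    IsScalarTower.of_algebraMap_smul fun r v => by
      change φ (algebraMap K _ r) v = r • v
      rw [AlgHom.commutes, Module.algebraMap_end_apply]
  have : Module.Finite (AdjoinRoot P) V := Module.Finite.of_restrictScalars_finite K _ _
  rw [← Module.finrank_mul_finrank K (AdjoinRoot P) V,
    (AdjoinRoot.powerBasis hP.ne_zero).finrank, AdjoinRoot.powerBasis_dim]
  exact dvd_mul_right _ _

lemma apply_mem_ker_sum_pow {w : V} (hw : w ∈ LinearMap.ker (∑ k ∈ Finset.range p, f ^ k)) :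
    f w ∈ LinearMap.ker (∑ k ∈ Finset.range p, f ^ k) := by
  have hcomm : Commute (∑ k ∈ Finset.range p, f ^ k) f :=
    Commute.sum_left _ _ _ fun k _ => Commute.pow_self f k
  rw [LinearMap.mem_ker, ← Module.End.mul_apply, hcomm.eq, Module.End.mul_apply,
    LinearMap.mem_ker.1 hw, map_zero]

lemma sub_one_apply_mem_ker_sum_pow (hf : f ^ p = 1) (v : V) :
    (f - 1) v ∈ LinearMap.ker (∑ k ∈ Finset.range p, f ^ k) := by
  rw [LinearMap.mem_ker, ← Module.End.mul_apply, geom_sum_mul, hf, sub_self,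
    LinearMap.zero_apply]

lemma aeval_restrict_cyclotomic_eq_zero [Fact p.Prime] :
    aeval (f.restrict fun _ => apply_mem_ker_sum_pow (p := p)) (cyclotomic p K) = 0 := by
  ext w
  have hw := LinearMap.mem_ker.1 w.2
  rw [LinearMap.sum_apply] at hw
  simp only [cyclotomic_prime, map_sum, map_pow, aeval_X, LinearMap.sum_apply]
  simp_rw [Module.End.pow_restrict _ fun _ => apply_mem_ker_sum_pow (p := p)]
  simpa using hw

variable [CharZero K]

lemma isProj_ker_sub_one (hp : p ≠ 0) (hf : f ^ p = 1) :
    LinearMap.IsProj (LinearMap.ker (f - 1)) ((p : K)⁻¹ • ∑ k ∈ Finset.range p, f ^ k) where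
  map_mem x := by
    rw [LinearMap.mem_ker, LinearMap.smul_apply, map_smul, ← Module.End.mul_apply,
      mul_geom_sum, hf, sub_self, LinearMap.zero_apply, smul_zero]
  map_id x hx := by
    have hfix : ∀ k, (f ^ k) x = x := fun k => by
      rw [LinearMap.mem_ker, LinearMap.sub_apply, sub_eq_zero] at hx
      rw [Module.End.coe_pow]
      exact Function.iterate_fixed hx k
    simp [LinearMap.sum_apply, hfix, ← Nat.cast_smul_eq_nsmul K, smul_smul, hp]

theorem trace_sum_pow [FiniteDimensional K V] (hp : p ≠ 0) (hf : f ^ p = 1) :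
    LinearMap.trace K V (∑ k ∈ Finset.range p, f ^ k) = p * finrank K (LinearMap.ker (f - 1)) := by
  have := (isProj_ker_sub_one hp hf).trace
  rw [map_smul, smul_eq_mul] at this
  field_simp at this
  linear_combination this

lemma isCompl_ker_sub_one (hp : p ≠ 0) (hf : f ^ p = 1) :
    IsCompl (LinearMap.ker (f - 1)) (LinearMap.ker (∑ k ∈ Finset.range p, f ^ k)) := by
  have := (isProj_ker_sub_one hp hf).isCompl
  rwa [LinearMap.ker_smul _ _ (inv_ne_zero (Nat.cast_ne_zero.2 hp))] at this

end

variable {V : Type*} [AddCommGroup V] [Module ℚ V] [FiniteDimensional ℚ V] {f : Module.End ℚ V}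
  {p : ℕ} [hp : Fact p.Prime]

/-- `Φₚ(f) = ∑_{k<p} f ^ k` vanishes on its own kernel, which is therefore a vector space over
`ℚ(ζₚ)`: its dimension is a multiple of `p - 1`. -/
lemma finrank_ker_sum_pow (hf : orderOf f = p) (hV : finrank ℚ V < 2 * (p - 1)) :
    finrank ℚ (LinearMap.ker (∑ k ∈ Finset.range p, f ^ k)) = p - 1 := by
  have hdvd := natDegree_dvd_finrank_of_aeval_eq_zero (cyclotomic.irreducible_rat hp.out.pos)
    (aeval_restrict_cyclotomic_eq_zero (f := f))
  rw [natDegree_cyclotomic, Nat.totient_prime hp.out] at hdvd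
  have hpos : 0 < finrank ℚ (LinearMap.ker (∑ k ∈ Finset.range p, f ^ k)) := by
    obtain ⟨v, hv⟩ : ∃ v, (f - 1) v ≠ 0 := by
      by_contra! h
      refine hp.out.one_lt.ne' ?_
      rw [← hf, sub_eq_zero.1 (LinearMap.ext h), orderOf_one]
    exact finrank_pos_iff_exists_ne_zero.2
      ⟨⟨_, sub_one_apply_mem_ker_sum_pow (hf ▸ pow_orderOf_eq_one f) v⟩, by simpa using hv⟩
  have hle := Submodule.finrank_le (LinearMap.ker (∑ k ∈ Finset.range p, f ^ k))
  obtain ⟨m, hm⟩ := hdvd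
  rcases m with _ | _ | m
  · omega
  · simpa using hm
  · nlinarith

theorem finrank_ker_sub_one_add (hf : orderOf f = p) (hV : finrank ℚ V < 2 * (p - 1)) :
    finrank ℚ (LinearMap.ker (f - 1)) + (p - 1) = finrank ℚ V := by
  rw [← finrank_ker_sum_pow hf hV]
  exact Submodule.finrank_add_eq_of_isCompl
    (isCompl_ker_sub_one hp.out.ne_zero (hf ▸ pow_orderOf_eq_one f))

end Module.End

namespace Matrix

variable {M : Matrix (Fin 8) (Fin 8) ℚ}

lemma finrank_ker_toLin'_sub_one_eq_two (hM : orderOf M = 7) :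
    finrank ℚ (LinearMap.ker (M.toLin' - 1)) = 2 := by
  have : Fact (Nat.Prime 7) := ⟨by norm_num⟩
  have := Module.End.finrank_ker_sub_one_add (f := M.toLin') (p := 7)
    (by rw [← hM]; exact MulEquiv.orderOf_eq toLinAlgEquiv'.toMulEquiv M) (by simp)
  simp only [finrank_fin_fun] at this
  omega

lemma trace_sum_pow_eq_fourteen (hM : orderOf M = 7) :
    (∑ k ∈ Finset.range 7, M ^ k).trace = 14 := by
  have h7 : toLinAlgEquiv' M ^ 7 = 1 := by rw [← map_pow, ← hM, pow_orderOf_eq_one, map_one]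
  have h2 : finrank ℚ (LinearMap.ker (toLinAlgEquiv' M - 1)) = 2 :=
    finrank_ker_toLin'_sub_one_eq_two hM
  have hsum : toLin' (∑ k ∈ Finset.range 7, M ^ k) =
      ∑ k ∈ Finset.range 7, toLinAlgEquiv' M ^ k := by
    simp only [← map_pow]; exact map_sum toLinAlgEquiv' _ _
  have := Module.End.trace_sum_pow (by norm_num) h7
  rw [h2, ← hsum, trace_toLin'_eq] at this
  rw [this]; norm_num

end Matrix

section SecondMoment

open Finset

variable {K : Type*} [Field K] {n : ℕ}

def negPair (i j : Fin n) (x : Fin n → K) : Fin n → K :=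
  fun k => if k = i ∨ k = j then -x k else x k

variable {S : Finset (Fin n → K)}

lemma sum_comp_perm (hperm : ∀ σ : Equiv.Perm (Fin n), ∀ x ∈ S, x ∘ σ ∈ S)
    (σ : Equiv.Perm (Fin n)) (g : (Fin n → K) → K) :
    ∑ x ∈ S, g (x ∘ σ) = ∑ x ∈ S, g x :=
  sum_nbij' (· ∘ σ) (· ∘ σ.symm) (fun x hx => hperm σ x hx) (fun x hx => hperm σ.symm x hx)
    (fun x _ => by ext; simp) (fun x _ => by ext; simp) fun _ _ => rfl

lemma sum_negPair (hneg : ∀ i j, i ≠ j → ∀ x ∈ S, negPair i j x ∈ S) {i j : Fin n}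
    (hij : i ≠ j) (g : (Fin n → K) → K) :
    ∑ x ∈ S, g (negPair i j x) = ∑ x ∈ S, g x := by
  have hinv : ∀ x : Fin n → K, negPair i j (negPair i j x) = x := fun x => by
    ext k; by_cases hk : k = i ∨ k = j <;> simp [negPair, hk]
  exact sum_nbij' (negPair i j) (negPair i j) (fun x hx => hneg i j hij x hx)
    (fun x hx => hneg i j hij x hx) (fun x _ => hinv x) (fun x _ => hinv x) fun _ _ => rfl

variable [CharZero K]

lemma sum_mul_eq_zero_of_negPair_mem (hn : 3 ≤ n) (hneg : ∀ i j, i ≠ j → ∀ x ∈ S, negPair i j x ∈ S)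
    {i j : Fin n} (hij : i ≠ j) : ∑ x ∈ S, x i * x j = 0 := by
  obtain ⟨l, -, hl⟩ := exists_mem_notMem_of_card_lt_card
    (s := {i, j}) (t := univ) (by simpa using (card_le_two.trans_lt (by omega)))
  rw [mem_insert, mem_singleton, not_or] at hl
  have := sum_negPair hneg (Ne.symm hl.1) fun x => x i * x j
  simp only [negPair, Ne.symm hl.1, Ne.symm hl.2, hij.symm, true_or, or_self, if_true,
    if_false, neg_mul, sum_neg_distrib] at this
  exact self_eq_neg.1 this.symm

lemma sum_mul_self_eq_of_comp_perm_mem {c : K} (hnorm : ∀ x ∈ S, x ⬝ᵥ x = c)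
    (hperm : ∀ σ : Equiv.Perm (Fin n), ∀ x ∈ S, x ∘ σ ∈ S) (i : Fin n) :
    ∑ x ∈ S, x i * x i = c * #S / n := by
  have hall : ∀ j, ∑ x ∈ S, x j * x j = ∑ x ∈ S, x i * x i := fun j => by
    simpa using sum_comp_perm hperm (Equiv.swap i j) fun x => x i * x i
  have htot : ∑ j, ∑ x ∈ S, x j * x j = c * #S := by
    rw [sum_comm]
    exact (sum_congr rfl hnorm).trans (by rw [sum_const, nsmul_eq_mul, mul_comm])
  rw [sum_congr rfl fun j _ => hall j, sum_const, card_univ, Fintype.card_fin, nsmul_eq_mul]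
    at htot
  have : (n : K) ≠ 0 := Nat.cast_ne_zero.2 i.pos.ne'
  rw [← htot]
  field_simp

/-- The second moment of `S` is `(c |S| / n) I`: sign changes kill its off-diagonal entries and
permutations equalize the diagonal ones. -/
theorem sum_mulVec_dotProduct_self (hn : 3 ≤ n) {c : K} (hnorm : ∀ x ∈ S, x ⬝ᵥ x = c)
    (hperm : ∀ σ : Equiv.Perm (Fin n), ∀ x ∈ S, x ∘ σ ∈ S)
    (hneg : ∀ i j, i ≠ j → ∀ x ∈ S, negPair i j x ∈ S) (A : Matrix (Fin n) (Fin n) K) :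
    ∑ x ∈ S, A *ᵥ x ⬝ᵥ x = c * #S / n * A.trace := by
  have hmoment : ∀ i j, ∑ x ∈ S, x j * x i = if i = j then c * #S / n else 0 := fun i j => by
    split_ifs with hij
    · rw [hij, sum_mul_self_eq_of_comp_perm_mem hnorm hperm]
    · exact sum_mul_eq_zero_of_negPair_mem hn hneg (Ne.symm hij)
  calc ∑ x ∈ S, A *ᵥ x ⬝ᵥ x = ∑ i, ∑ j, A i j * ∑ x ∈ S, x j * x i := by
        simp only [dotProduct, mulVec, mul_sum, sum_mul]
        rw [sum_comm]
        refine sum_congr rfl fun i _ => ?_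
        rw [sum_comm]
        exact sum_congr rfl fun j _ => sum_congr rfl fun x _ => by ring
    _ = c * #S / n * A.trace := by
        simp [hmoment, Matrix.trace, sum_mul, mul_comm]

end SecondMoment

section NormTwoVectors

open Finset

variable {K : Type*} [Field K] {n : ℕ} {u v v₁ v₂ w : Fin n → K}

lemma span_pair_eq_of_finrank_le_two {E : Submodule K (Fin n → K)} (hE : finrank K E ≤ 2)
    (hv₁ : v₁ ∈ E) (hv₂ : v₂ ∈ E) (hli : LinearIndependent K ![v₁, v₂]) :
    Submodule.span K {v₁, v₂} = E := by
  refine Submodule.eq_of_le_of_finrank_le ?_ ?_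
  · rw [Submodule.span_le, Set.insert_subset_iff, Set.singleton_subset_iff]
    exact ⟨hv₁, hv₂⟩
  · have := finrank_span_eq_card hli
    rw [Matrix.range_cons, Matrix.range_cons, Matrix.range_empty, Set.union_empty,
      Set.singleton_union] at this
    rw [this]; simpa using hE

variable [LinearOrder K] [IsStrictOrderedRing K]

lemma dotProduct_self_pos (hv : v ≠ 0) : 0 < v ⬝ᵥ v :=
  lt_of_le_of_ne (sum_nonneg fun _ _ => mul_self_nonneg _)
    (Ne.symm (mt dotProduct_self_eq_zero.1 hv))

lemma dotProduct_lt_two (hu : u ⬝ᵥ u = 2) (hv : v ⬝ᵥ v = 2) (hne : u ≠ v) : u ⬝ᵥ v < 2 := by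
  have := dotProduct_self_pos (sub_ne_zero.2 hne)
  simp only [sub_dotProduct, dotProduct_sub, hu, hv, dotProduct_comm v u] at this
  linarith

lemma abs_dotProduct_lt_two (hu : u ⬝ᵥ u = 2) (hv : v ⬝ᵥ v = 2) (h₁ : u ≠ v) (h₂ : u ≠ -v) :
    |u ⬝ᵥ v| < 2 := by
  have := dotProduct_lt_two hu (by rwa [neg_dotProduct, dotProduct_neg, neg_neg]) h₂
  rw [dotProduct_neg] at this
  exact abs_lt.2 ⟨by linarith, dotProduct_lt_two hu hv h₁⟩

lemma abs_dotProduct_le_two (hu : u ⬝ᵥ u = 2) (hv : v ⬝ᵥ v = 2) : |u ⬝ᵥ v| ≤ 2 := by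
  rcases eq_or_ne u v with rfl | h₁
  · rw [hu, abs_two]
  rcases eq_or_ne u (-v) with rfl | h₂
  · rw [neg_dotProduct, abs_neg, hv, abs_two]
  exact (abs_dotProduct_lt_two hu hv h₁ h₂).le

lemma linearIndependent_pair_of_sq_dotProduct_lt (h₁ : v₁ ⬝ᵥ v₁ = 2) (h₂ : v₂ ⬝ᵥ v₂ = 2)
    (hc : (v₁ ⬝ᵥ v₂) ^ 2 < 4) : LinearIndependent K ![v₁, v₂] := by
  refine LinearIndependent.pair_iff.2 fun s t hst => ?_
  have e₁ := congrArg (· ⬝ᵥ v₁) hst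
  have e₂ := congrArg (· ⬝ᵥ v₂) hst
  simp only [add_dotProduct, smul_dotProduct, smul_eq_mul, zero_dotProduct, h₁, h₂,
    dotProduct_comm v₂ v₁] at e₁ e₂
  have hdet : 4 - (v₁ ⬝ᵥ v₂) ^ 2 ≠ 0 := by linarith
  exact ⟨(mul_eq_zero.1 (by linear_combination 2 * e₁ - (v₁ ⬝ᵥ v₂) * e₂ :
      s * (4 - (v₁ ⬝ᵥ v₂) ^ 2) = 0)).resolve_right hdet,
    (mul_eq_zero.1 (by linear_combination 2 * e₂ - (v₁ ⬝ᵥ v₂) * e₁ :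
      t * (4 - (v₁ ⬝ᵥ v₂) ^ 2) = 0)).resolve_right hdet⟩

/-- The Gram determinant of `v₁, v₂, w` vanishes when `w` lies in the span of `v₁, v₂`. -/
lemma dotProduct_relation_of_eq_smul_add_smul {s t : K} (hw : s • v₁ + t • v₂ = w)
    (h₁ : v₁ ⬝ᵥ v₁ = 2) (h₂ : v₂ ⬝ᵥ v₂ = 2) (hw₂ : w ⬝ᵥ w = 2) :
    (w ⬝ᵥ v₁) ^ 2 + (w ⬝ᵥ v₂) ^ 2 - (w ⬝ᵥ v₁) * (w ⬝ᵥ v₂) * (v₁ ⬝ᵥ v₂) =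
      4 - (v₁ ⬝ᵥ v₂) ^ 2 := by
  subst hw
  simp only [add_dotProduct, smul_dotProduct, dotProduct_add, dotProduct_smul, smul_eq_mul, h₁, h₂,
    dotProduct_comm v₂ v₁] at hw₂ ⊢
  linear_combination (4 - (v₁ ⬝ᵥ v₂) ^ 2) / 2 * hw₂

lemma eq_zero_of_eq_smul_add_smul_of_dotProduct_eq_zero {s t : K} (hu : s • v₁ + t • v₂ = u)
    (h₁ : u ⬝ᵥ v₁ = 0) (h₂ : u ⬝ᵥ v₂ = 0) : u = 0 := by
  refine dotProduct_self_eq_zero.1 ?_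
  nth_rewrite 2 [← hu]
  simp [dotProduct_add, dotProduct_smul, h₁, h₂]

end NormTwoVectors

section RootsInPlane

open Finset

variable {n : ℕ}

lemma card_le_two_of_forall_eq_or_eq_neg {S : Finset (Fin n → ℚ)}
    (hS : ∀ v₁ ∈ S, ∀ v₂ ∈ S, v₂ = v₁ ∨ v₂ = -v₁) : #S ≤ 2 := by
  rcases S.eq_empty_or_nonempty with rfl | ⟨v, hv⟩
  · simp
  calc #S ≤ #{v, -v} := card_le_card fun w hw => by rcases hS v hv w hw with rfl | rfl <;> simp
    _ ≤ 2 := card_le_two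

lemma card_filter_gram_le_six : ∀ c ∈ Icc (-1 : ℤ) 1,
    #((Icc (-2 : ℤ) 2 ×ˢ Icc (-2 : ℤ) 2).filter
      fun p => p.1 ^ 2 + p.2 ^ 2 - p.1 * p.2 * c = 4 - c ^ 2) ≤ 6 := by
  decide

/-- Two vectors `v₁ ≠ ±v₂` of the set span the plane, so that `w ↦ (w ⬝ᵥ v₁, w ⬝ᵥ v₂)` is
injective on it, with image in the integral solutions of the Gram relation. -/
theorem card_le_six_of_finrank_le_two {S : Finset (Fin n → ℚ)} {E : Submodule ℚ (Fin n → ℚ)}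
    (hE : finrank ℚ E ≤ 2) (hSE : ∀ x ∈ S, x ∈ E) (hnorm : ∀ x ∈ S, x ⬝ᵥ x = 2)
    (hint : ∀ x ∈ S, ∀ y ∈ S, ∃ z : ℤ, x ⬝ᵥ y = z) : #S ≤ 6 := by
  by_cases! hpair : ∀ v₁ ∈ S, ∀ v₂ ∈ S, v₂ = v₁ ∨ v₂ = -v₁
  · exact (card_le_two_of_forall_eq_or_eq_neg hpair).trans (by norm_num)
  obtain ⟨v₁, hv₁, v₂, hv₂, hne, hne'⟩ := hpair
  obtain ⟨c, hc⟩ := hint v₁ hv₁ v₂ hv₂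
  have hc₂ : |(c : ℚ)| < 2 := hc ▸ abs_dotProduct_lt_two (hnorm v₁ hv₁) (hnorm v₂ hv₂)
    (Ne.symm hne) fun h => hne' (by rw [h, neg_neg])
  have hcomb : ∀ w ∈ E, ∃ s t : ℚ, s • v₁ + t • v₂ = w := fun w hw =>
    Submodule.mem_span_pair.1 <| (span_pair_eq_of_finrank_le_two hE (hSE v₁ hv₁) (hSE v₂ hv₂)
      (linearIndependent_pair_of_sq_dotProduct_lt (hnorm v₁ hv₁) (hnorm v₂ hv₂)
        (by rw [hc, ← sq_abs]; nlinarith [abs_nonneg (c : ℚ)]))) ▸ hw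
  have hfloor : ∀ w ∈ S, ∀ v ∈ S, (⌊w ⬝ᵥ v⌋ : ℚ) = w ⬝ᵥ v := fun w hw v hv => by
    obtain ⟨z, hz⟩ := hint w hw v hv
    rw [hz, Int.floor_intCast]
  have hcIcc : c ∈ Icc (-1) 1 := by
    have : |c| < 2 := by exact_mod_cast hc₂
    exact mem_Icc.2 ⟨by linarith [neg_abs_le c], by linarith [le_abs_self c]⟩
  refine (card_le_card_of_injOn (fun w => (⌊w ⬝ᵥ v₁⌋, ⌊w ⬝ᵥ v₂⌋)) (fun w hw => ?_) ?_).trans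
    (card_filter_gram_le_six c hcIcc)
  · have hbound : ∀ v ∈ S, -2 ≤ ⌊w ⬝ᵥ v⌋ ∧ ⌊w ⬝ᵥ v⌋ ≤ 2 := fun v hv => by
      have := abs_le.1 (abs_dotProduct_le_two (hnorm w hw) (hnorm v hv))
      rw [← hfloor w hw v hv] at this
      exact ⟨by exact_mod_cast this.1, by exact_mod_cast this.2⟩
    obtain ⟨s, t, hst⟩ := hcomb w (hSE w hw)
    have hrel := dotProduct_relation_of_eq_smul_add_smul hst (hnorm v₁ hv₁) (hnorm v₂ hv₂)
      (hnorm w hw)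
    rw [← hfloor w hw v₁ hv₁, ← hfloor w hw v₂ hv₂, hc] at hrel
    simp only [coe_filter, mem_product, mem_Icc, Set.mem_ofPred_eq]
    exact ⟨⟨hbound v₁ hv₁, hbound v₂ hv₂⟩, by exact_mod_cast hrel⟩
  · intro w hw w' hw' hww'
    simp only [Prod.mk.injEq] at hww'
    have e₁ : w ⬝ᵥ v₁ = w' ⬝ᵥ v₁ := by rw [← hfloor w hw v₁ hv₁, ← hfloor w' hw' v₁ hv₁, hww'.1]
    have e₂ : w ⬝ᵥ v₂ = w' ⬝ᵥ v₂ := by rw [← hfloor w hw v₂ hv₂, ← hfloor w' hw' v₂ hv₂, hww'.2]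
    obtain ⟨s, t, hst⟩ := hcomb _ (sub_mem (hSE w hw) (hSE w' hw'))
    exact sub_eq_zero.1 (eq_zero_of_eq_smul_add_smul_of_dotProduct_eq_zero hst
      (by rw [sub_dotProduct, e₁, sub_self]) (by rw [sub_dotProduct, e₂, sub_self]))

end RootsInPlane

lemma LinearEquiv.exists_apply_sub_eq_pow_apply_sub {R M : Type*} [Ring R] [AddCommGroup M]
    [Module R M] (h : M ≃ₗ[R] M) (k : ℕ) (y : M) : ∃ x, h x - x = (h ^ k) y - y := by
  refine ⟨∑ j ∈ Finset.range k, (h ^ j) y, ?_⟩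
  rw [map_sum, ← Finset.sum_sub_distrib]
  convert Finset.sum_range_sub (fun j => (h ^ j) y) k using 2 with j
  · rw [pow_succ', LinearEquiv.mul_apply]
  · rw [pow_zero, LinearEquiv.coe_one, id]

lemma LinearEquiv.apply_eq_of_pow_apply_eq {R M : Type*} [Semiring R] [AddCommMonoid M]
    [Module R M] {h : M ≃ₗ[R] M} {k : ℕ} (hk : k.Coprime (orderOf h)) {y : M}
    (hy : (h ^ k) y = y) : h y = y := by
  obtain ⟨m, hm⟩ := exists_pow_eq_self_of_coprime hk
  rw [← hm, LinearEquiv.coe_pow]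
  exact Function.iterate_fixed hy m

namespace E8Lat

open Finset

variable {x y : Fin 8 → ℚ}

lemma exists_two_mul_eq_int (hx : x ∈ E8Lat) (i : Fin 8) : ∃ z : ℤ, 2 * x i = z := by
  rcases hx.1 with hx | hx <;> obtain ⟨z, hz⟩ := hx i
  · exact ⟨2 * z, by rw [hz]; push_cast; ring⟩
  · exact ⟨2 * z + 1, by rw [hz]; push_cast; ring⟩

lemma exists_dotProduct_self_eq_two_mul (hx : x ∈ E8Lat) : ∃ m : ℤ, x ⬝ᵥ x = 2 * m := by
  obtain ⟨hx, k, hk⟩ := hx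
  rcases hx with hx | hx <;> choose z hz using hx
  · choose w hw using fun i => Int.even_mul_pred_self (z i)
    refine ⟨k + ∑ i, w i, ?_⟩
    have hsq : ∀ i, x i * x i = x i + 2 * w i := fun i => by
      rw [hz i]; exact_mod_cast (by linear_combination hw i : z i * z i = z i + 2 * w i)
    simp only [dotProduct, hsq, sum_add_distrib, hk, ← mul_sum]
    push_cast; ring
  · choose w hw using fun i => Int.even_mul_succ_self (z i)
    refine ⟨1 + ∑ i, w i, ?_⟩
    have hsq : ∀ i, x i * x i = 2 * w i + 1 / 4 := fun i => by
      rw [hz i]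
      have : (z i : ℚ) * (z i + 1) = w i + w i := by exact_mod_cast hw i
      linear_combination this
    simp only [dotProduct, hsq, sum_add_distrib, ← mul_sum]
    simp; ring

lemma exists_dotProduct_eq_int (hx : x ∈ E8Lat) (hy : y ∈ E8Lat) :
    ∃ z : ℤ, x ⬝ᵥ y = z := by
  obtain ⟨a, ha⟩ := exists_dotProduct_self_eq_two_mul hx
  obtain ⟨b, hb⟩ := exists_dotProduct_self_eq_two_mul hy
  obtain ⟨c, hc⟩ := exists_dotProduct_self_eq_two_mul (add_mem hx hy)
  refine ⟨c - a - b, ?_⟩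
  simp only [add_dotProduct, dotProduct_add, dotProduct_comm y x] at hc
  push_cast; linarith

lemma comp_perm_mem (hx : x ∈ E8Lat) (σ : Equiv.Perm (Fin 8)) : x ∘ σ ∈ E8Lat := by
  obtain ⟨hx | hx, hsum⟩ := hx
  · exact ⟨Or.inl fun i => hx (σ i), by rwa [Function.comp_def, Equiv.sum_comp σ x]⟩
  · exact ⟨Or.inr fun i => hx (σ i), by rwa [Function.comp_def, Equiv.sum_comp σ x]⟩

lemma single_two_mem (j : Fin 8) : Pi.single j (2 : ℚ) ∈ E8Lat :=
  ⟨Or.inl fun i => ⟨(Pi.single j 2 : Fin 8 → ℤ) i, by simp [Pi.single_apply]⟩, 1, by simp⟩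

lemma single_sub_single_mem (i j : Fin 8) : Pi.single i (1 : ℚ) - Pi.single j 1 ∈ E8Lat :=
  ⟨Or.inl fun k => ⟨(Pi.single i 1 - Pi.single j 1 : Fin 8 → ℤ) k, by simp [Pi.single_apply]⟩,
    0, by simp [sum_sub_distrib]⟩

lemma single_add_single_mem (i j : Fin 8) : Pi.single i (1 : ℚ) + Pi.single j 1 ∈ E8Lat :=
  ⟨Or.inl fun k => ⟨(Pi.single i 1 + Pi.single j 1 : Fin 8 → ℤ) k, by simp [Pi.single_apply]⟩,
    1, by simp [sum_add_distrib]; norm_num⟩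

lemma matrix_ext {A B : Matrix (Fin 8) (Fin 8) ℚ} (h : ∀ x ∈ E8Lat, A *ᵥ x = B *ᵥ x) : A = B := by
  refine ext_of_mulVec_single fun j => ?_
  have h2 := h _ (single_two_mem j)
  rw [show Pi.single j (2 : ℚ) = (2 : ℚ) • Pi.single j 1 by
    rw [← Pi.single_smul, smul_eq_mul, mul_one], mulVec_smul, mulVec_smul] at h2
  exact smul_right_injective _ two_ne_zero h2

-- The `ℚ`-linear extension of `f`, read off from the lattice vectors `2 eⱼ`.
def ratMatrix (f : Module.End ℤ E8Lat) : Matrix (Fin 8) (Fin 8) ℚ :=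
  Matrix.of fun i j => (f ⟨Pi.single j 2, single_two_mem j⟩ : Fin 8 → ℚ) i / 2

lemma ratMatrix_mulVec (f : Module.End ℤ E8Lat) {x : Fin 8 → ℚ} (hx : x ∈ E8Lat) :
    ratMatrix f *ᵥ x = f ⟨x, hx⟩ := by
  choose c hc using exists_two_mul_eq_int hx
  have h4 : (4 : ℤ) • (⟨x, hx⟩ : E8Lat) = ∑ j, c j • ⟨Pi.single j 2, single_two_mem j⟩ := by
    ext i
    simp [Pi.single_apply, ← hc]
    ring
  have hf4 := congrArg (fun v : E8Lat => (v : Fin 8 → ℚ)) (congrArg f h4)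
  simp only [map_zsmul, map_sum, Submodule.coe_sum, Submodule.coe_smul] at hf4
  ext i
  have hi := congrFun hf4 i
  simp only [Pi.smul_apply, Finset.sum_apply, zsmul_eq_mul, Pi.mul_apply, Pi.intCast_apply] at hi
  simp only [ratMatrix, mulVec, dotProduct, of_apply]
  calc ∑ j, (f ⟨Pi.single j 2, _⟩ : Fin 8 → ℚ) i / 2 * x j
      = (∑ j, (c j : ℚ) * (f ⟨Pi.single j 2, _⟩ : Fin 8 → ℚ) i) / 4 := by
        rw [sum_div]
        exact sum_congr rfl fun j _ => by rw [← hc]; ring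
    _ = _ := by rw [← hi]; push_cast; ring

lemma ratMatrix_mul (f g : Module.End ℤ E8Lat) :
    ratMatrix (f * g) = ratMatrix f * ratMatrix g :=
  matrix_ext fun x hx => by
    rw [← mulVec_mulVec, ratMatrix_mulVec g hx, ratMatrix_mulVec f, ratMatrix_mulVec _ hx]; rfl

lemma ratMatrix_one : ratMatrix 1 = 1 :=
  matrix_ext fun x hx => by rw [ratMatrix_mulVec _ hx, one_mulVec]; rfl

lemma ratMatrix_injective : Function.Injective ratMatrix := fun f g hfg =>
  LinearMap.ext fun x => Subtype.ext <| by
    rw [← ratMatrix_mulVec f x.2, ← ratMatrix_mulVec g x.2, hfg]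

lemma negPair_mem {i j : Fin 8} (hij : i ≠ j) (hx : x ∈ E8Lat) : negPair i j x ∈ E8Lat := by
  obtain ⟨a, ha⟩ := exists_dotProduct_eq_int hx (single_add_single_mem i j)
  obtain ⟨b, hb⟩ := exists_dotProduct_eq_int hx (single_sub_single_mem i j)
  simp only [dotProduct_add, dotProduct_sub, dotProduct_single, mul_one] at ha hb
  -- the product of the reflections in the roots `eᵢ + eⱼ` and `eᵢ - eⱼ`
  have : negPair i j x =
      x - a • (Pi.single i 1 + Pi.single j 1) - b • (Pi.single i 1 - Pi.single j 1) := by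
    ext k
    by_cases hki : k = i
    · subst hki; simp [negPair, hij, ← Int.cast_smul_eq_zsmul ℚ, ← ha, ← hb]; ring
    by_cases hkj : k = j
    · subst hkj; simp [negPair, hki, ← Int.cast_smul_eq_zsmul ℚ, ← ha, ← hb]; ring
    · simp [negPair, hki, hkj]
  rw [this]
  exact sub_mem (sub_mem hx (zsmul_mem (single_add_single_mem i j) a))
    (zsmul_mem (single_sub_single_mem i j) b)

lemma finite_setOf_roots : {x : Fin 8 → ℚ | x ∈ E8Lat ∧ x ⬝ᵥ x = 2}.Finite := by
  refine (Set.Finite.pi' (t := fun _ => (fun z : ℤ => (z : ℚ) / 2) '' Set.Icc (-2) 2)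
    fun _ => (Set.finite_Icc _ _).image _).subset
    fun x ⟨hx, hx2⟩ i => ?_
  obtain ⟨z, hz⟩ := exists_two_mul_eq_int hx i
  have hsq : x i * x i ≤ 2 :=
    hx2 ▸ single_le_sum (f := fun i => x i * x i) (fun i _ => mul_self_nonneg _)
      (mem_univ i)
  have hz8 : z * z ≤ 8 := by
    have : (z : ℚ) * z ≤ 8 := by rw [← hz]; nlinarith
    exact_mod_cast this
  exact ⟨z, Set.mem_Icc.2 ⟨by nlinarith, by nlinarith⟩, by simp only [← hz]; ring⟩

noncomputable def roots : Finset (Fin 8 → ℚ) := finite_setOf_roots.toFinset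

lemma mem_roots : x ∈ roots ↔ x ∈ E8Lat ∧ x ⬝ᵥ x = 2 := Set.Finite.mem_toFinset _

lemma comp_perm_mem_roots (σ : Equiv.Perm (Fin 8)) (hx : x ∈ roots) : x ∘ σ ∈ roots := by
  rw [mem_roots] at hx ⊢
  exact ⟨comp_perm_mem hx.1 σ, by rw [comp_equiv_dotProduct_comp_equiv, hx.2]⟩

lemma negPair_mem_roots {i j : Fin 8} (hij : i ≠ j) (hx : x ∈ roots) : negPair i j x ∈ roots := by
  rw [mem_roots] at hx ⊢
  refine ⟨negPair_mem hij hx.1, hx.2 ▸ sum_congr rfl fun k _ => ?_⟩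
  by_cases hk : k = i ∨ k = j <;> simp [negPair, hk]

lemma single_sub_single_mem_roots {i j : Fin 8} (hij : i ≠ j) :
    Pi.single i 1 - Pi.single j 1 ∈ roots := by
  refine mem_roots.2 ⟨single_sub_single_mem i j, ?_⟩
  simp [dotProduct_sub, hij, hij.symm]
  norm_num

lemma le_card_roots : 56 ≤ roots.card := by
  have hinj : Set.InjOn (fun p : Fin 8 × Fin 8 => (Pi.single p.1 1 - Pi.single p.2 1 : Fin 8 → ℚ))
      (univ.offDiag : Finset (Fin 8 × Fin 8)) := by
    rintro ⟨i, j⟩ hij ⟨k, l⟩ hkl h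
    simp only [coe_offDiag, Set.mem_offDiag, coe_univ, Set.mem_univ, true_and] at hij hkl
    obtain rfl : i = k := by
      by_contra hik
      have hi := congrFun h i
      simp only [Pi.sub_apply, Pi.single_apply, if_neg hij, if_neg hik] at hi
      split_ifs at hi <;> norm_num at hi
    obtain rfl : j = l := by
      by_contra hjl
      have hj := congrFun h j
      simp only [Pi.sub_apply, Pi.single_apply, if_neg hij.symm, if_neg hjl] at hj
      split_ifs at hj <;> norm_num at hj
    rfl
  calc 56 = (univ.offDiag : Finset (Fin 8 × Fin 8)).card := by simp
    _ = _ := (card_image_of_injOn hinj).symm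
    _ ≤ roots.card := card_le_card fun x hx => by
        obtain ⟨⟨i, j⟩, hij, rfl⟩ := mem_image.1 hx
        exact single_sub_single_mem_roots (mem_offDiag.1 hij).2.2

variable {h : E8Lat ≃ₗ[ℤ] E8Lat}

lemma E8form_eq_dotProduct (x y : E8Lat) : E8form x y = (x : Fin 8 → ℚ) ⬝ᵥ y := rfl

def IsRootless (h : E8Lat ≃ₗ[ℤ] E8Lat) : Prop := ∀ x : E8Lat, E8form (h x - x) (h x - x) ≠ 2

lemma E8form_pow_apply (hB : ∀ x y : E8Lat, E8form (h x) (h y) = E8form x y) (k : ℕ)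
    (x y : E8Lat) : E8form ((h ^ k) x) ((h ^ k) y) = E8form x y := by
  induction k with
  | zero => rfl
  | succ k ih => rw [pow_succ', LinearEquiv.mul_apply, LinearEquiv.mul_apply, hB, ih]

lemma E8form_pow_apply_le_zero (hB : ∀ x y : E8Lat, E8form (h x) (h y) = E8form x y)
    (hR : IsRootless h) (hord : orderOf h = 7) {y : E8Lat} (hy : E8form y y = 2) (hfix : h y ≠ y)
    {k : ℕ} (hk₀ : 0 < k) (hk : k < 7) : E8form ((h ^ k) y) y ≤ 0 := by
  have hky : E8form ((h ^ k) y) ((h ^ k) y) = 2 := (E8form_pow_apply hB k y y).trans hy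
  obtain ⟨z, hz⟩ := exists_dotProduct_eq_int ((h ^ k) y).2 y.2
  rw [E8form_eq_dotProduct] at hky hy ⊢
  have hcop : k.Coprime (orderOf h) := hord ▸
    ((Nat.Prime.coprime_iff_not_dvd (by norm_num)).2 (Nat.not_dvd_of_pos_of_lt hk₀ hk)).symm
  have hne : ((h ^ k) y : Fin 8 → ℚ) ≠ y := fun he =>
    hfix (LinearEquiv.apply_eq_of_pow_apply_eq hcop (Subtype.ext he))
  have hz₂ : z < 2 := by exact_mod_cast hz ▸ dotProduct_lt_two hky hy hne
  have hz₁ : z ≠ 1 := by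
    rintro rfl
    obtain ⟨x, hx⟩ := h.exists_apply_sub_eq_pow_apply_sub k y
    apply hR x
    rw [hx, E8form_eq_dotProduct, Submodule.coe_sub, sub_dotProduct, dotProduct_sub,
      dotProduct_sub, hky, hy, dotProduct_comm (y : Fin 8 → ℚ), hz]
    norm_num
  rw [hz]
  exact_mod_cast (by omega : z ≤ 0)

lemma sum_E8form_pow_apply_le (hB : ∀ x y : E8Lat, E8form (h x) (h y) = E8form x y)
    (hR : IsRootless h) (hord : orderOf h = 7) {y : E8Lat} (hy : E8form y y = 2) :
    ∑ k ∈ range 7, E8form ((h ^ k) y) y ≤ 2 + 12 * if h y = y then 1 else 0 := by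
  split_ifs with hfix
  · have : ∀ k, (h ^ k) y = y := fun k => by
      rw [LinearEquiv.coe_pow]; exact Function.iterate_fixed hfix k
    simp only [this, hy, sum_const, card_range]
    norm_num
  · rw [sum_range_succ', pow_zero, LinearEquiv.coe_one, id, hy]
    have := sum_nonpos fun k (hk : k ∈ range 6) =>
      E8form_pow_apply_le_zero hB hR hord hy hfix k.succ_pos (by simp at hk; omega)
    linarith

def ratMatrixHom : (E8Lat ≃ₗ[ℤ] E8Lat) →* Matrix (Fin 8) (Fin 8) ℚ where
  toFun h := ratMatrix h.toLinearMap
  map_one' := ratMatrix_one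
  map_mul' f g := ratMatrix_mul f.toLinearMap g.toLinearMap

lemma ratMatrixHom_pow_mulVec (h : E8Lat ≃ₗ[ℤ] E8Lat) (k : ℕ) {y : Fin 8 → ℚ} (hy : y ∈ E8Lat) :
    ratMatrixHom h ^ k *ᵥ y = (h ^ k) ⟨y, hy⟩ := by
  rw [← map_pow]
  exact ratMatrix_mulVec _ hy

lemma orderOf_ratMatrixHom (h : E8Lat ≃ₗ[ℤ] E8Lat) : orderOf (ratMatrixHom h) = orderOf h :=
  orderOf_injective _ (fun _ _ hfg => LinearEquiv.toLinearMap_injective (ratMatrix_injective hfg)) h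

lemma card_filter_mulVec_eq_self_le_six (hord : orderOf h = 7) :
    #(roots.filter fun y => ratMatrixHom h *ᵥ y = y) ≤ 6 := by
  refine card_le_six_of_finrank_le_two (E := LinearMap.ker ((ratMatrixHom h).toLin' - 1))
    (Matrix.finrank_ker_toLin'_sub_one_eq_two (by rw [orderOf_ratMatrixHom, hord])).le
    (fun y hy => ?_) (fun y hy => (mem_roots.1 (mem_filter.1 hy).1).2)
    (fun x hx y hy => exists_dotProduct_eq_int (mem_roots.1 (mem_filter.1 hx).1).1
      (mem_roots.1 (mem_filter.1 hy).1).1)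
  rw [LinearMap.mem_ker, LinearMap.sub_apply, Matrix.toLin'_apply, Module.End.one_apply,
    sub_eq_zero]
  exact (mem_filter.1 hy).2

lemma sum_pow_mulVec_dotProduct_le (hB : ∀ x y : E8Lat, E8form (h x) (h y) = E8form x y)
    (hR : IsRootless h) (hord : orderOf h = 7) {y : Fin 8 → ℚ} (hy : y ∈ roots) :
    (∑ k ∈ range 7, ratMatrixHom h ^ k) *ᵥ y ⬝ᵥ y ≤
      2 + 12 * if ratMatrixHom h *ᵥ y = y then 1 else 0 := by
  obtain ⟨hyE, hy₂⟩ := mem_roots.1 hy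
  have hfix : ratMatrixHom h *ᵥ y = y ↔ h ⟨y, hyE⟩ = ⟨y, hyE⟩ := by
    rw [← pow_one (ratMatrixHom h), ratMatrixHom_pow_mulVec h 1 hyE, pow_one, Subtype.ext_iff]
  rw [Matrix.sum_mulVec, sum_dotProduct, if_congr hfix rfl rfl]
  simp_rw [ratMatrixHom_pow_mulVec h _ hyE]
  exact sum_E8form_pow_apply_le hB hR hord (y := ⟨y, hyE⟩) hy₂

theorem card_roots_le_of_isRootless (hB : ∀ x y : E8Lat, E8form (h x) (h y) = E8form x y)
    (hR : IsRootless h) (hord : orderOf h = 7) :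
    #roots ≤ 8 * #(roots.filter fun y => ratMatrixHom h *ᵥ y = y) := by
  have hdesign := sum_mulVec_dotProduct_self (S := roots) (by norm_num) (c := (2 : ℚ))
    (fun x hx => (mem_roots.1 hx).2) (fun σ x hx => comp_perm_mem_roots σ hx)
    (fun i j hij x hx => negPair_mem_roots hij hx) (∑ k ∈ range 7, ratMatrixHom h ^ k)
  rw [Matrix.trace_sum_pow_eq_fourteen (by rw [orderOf_ratMatrixHom, hord])] at hdesign
  have hle := sum_le_sum fun y hy => sum_pow_mulVec_dotProduct_le hB hR hord hy
  rw [hdesign, sum_add_distrib, ← mul_sum, sum_boole, sum_const, nsmul_eq_mul] at hle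
  have : (#roots : ℚ) ≤ 8 * #(roots.filter fun y => ratMatrixHom h *ᵥ y = y) := by
    push_cast at hle; linarith
  exact_mod_cast this

end E8Lat

/-- There is no rootless element of order 7 in `O(E8)`: every isometry `h`
of the `E₈` lattice of order 7 satisfies that `(h−1)E8` contains a vector of norm 2. -/
theorem stmt_12 (h : E8Lat ≃ₗ[ℤ] E8Lat)
    (hB : ∀ x y : E8Lat, E8form (h x) (h y) = E8form x y)
    (hord : orderOf h = 7) :
    ∃ x : E8Lat, E8form (h x - x) (h x - x) = 2 := by
  by_contra! hR
  have := E8Lat.card_roots_le_of_isRootless hB hR hord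
  have := E8Lat.card_filter_mulVec_eq_self_le_six hord
  have := E8Lat.le_card_roots
  omega
end
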